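/- arXiv:1512.08037 — 11 statements merged into one kernel-verified Lean document; each statement's English description precedes it below -/
import Mathlib

section
/- Let h : [0,1] → [0,1] be strictly increasing and continuous with h(0)=0, h(1)=1, and let 0 < ε ≤ min(p₀, 1-p₀) with p₀ < 1. The DT probability premium λ, defined as the solution of h(p₀-ε) - 2·h(p₀-λ) + h(p₀+ε) = 0 with p₀ - λ ∈ [p₀-ε, p₀+ε], exists and is unique. Moreover, if h is strictly concave on (0,1), then λ > 0. -/
open Set
open Filter Topology


private lemma mid_concave_aux (h : ℝ → ℝ)
    (hcont : ContinuousOn h (Icc 0 1))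
    (hconc : StrictConcaveOn ℝ (Ioo 0 1) h)
    {x y : ℝ} (hx : x ∈ Icc (0:ℝ) 1) (hy : y ∈ Icc (0:ℝ) 1) (hxy : x < y) :
    (h x + h y) / 2 ≤ h ((x + y) / 2) := by
  obtain ⟨hx0, hx1⟩ := hx
  obtain ⟨hy0, hy1⟩ := hy
  have hd : ∀ n : ℕ, 0 < (y - x) / ((n : ℝ) + 3) := by
    intro n
    apply div_pos (by linarith) (by positivity)
  have hdlt : ∀ n : ℕ, (y - x) / ((n : ℝ) + 3) < (y - x) / 2 := by
    intro n
    apply div_lt_div_of_pos_left (by linarith) (by norm_num)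
    have : (0:ℝ) ≤ (n:ℝ) := Nat.cast_nonneg n
    linarith
  have humem : ∀ n : ℕ, x + (y - x) / ((n : ℝ) + 3) ∈ Ioo (0:ℝ) 1 := by
    intro n
    have h1 := hd n; have h2 := hdlt n
    constructor <;> [linarith; linarith]
  have hvmem : ∀ n : ℕ, y - (y - x) / ((n : ℝ) + 3) ∈ Ioo (0:ℝ) 1 := by
    intro n
    have h1 := hd n; have h2 := hdlt n
    constructor <;> [linarith; linarith]
  have hineq : ∀ n : ℕ, (h (x + (y - x) / ((n : ℝ) + 3)) + h (y - (y - x) / ((n : ℝ) + 3))) / 2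
      ≤ h ((x + y) / 2) := by
    intro n
    have key := hconc.concaveOn.2 (humem n) (hvmem n)
      (by norm_num : (0:ℝ) ≤ 1/2) (by norm_num : (0:ℝ) ≤ 1/2) (by norm_num)
    rw [smul_eq_mul, smul_eq_mul, smul_eq_mul, smul_eq_mul] at key
    have hmid : 1 / 2 * (x + (y - x) / ((n : ℝ) + 3)) + 1 / 2 * (y - (y - x) / ((n : ℝ) + 3))
        = (x + y) / 2 := by ring
    rw [hmid] at key
    linarith
  have hdl : Tendsto (fun n : ℕ => (y - x) / ((n : ℝ) + 3)) atTop (𝓝 0) := by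
    apply Tendsto.div_atTop tendsto_const_nhds
    exact tendsto_atTop_add_const_right _ 3 tendsto_natCast_atTop_atTop
  have hul : Tendsto (fun n : ℕ => x + (y - x) / ((n : ℝ) + 3)) atTop (𝓝 x) := by
    simpa using hdl.const_add x
  have hvl : Tendsto (fun n : ℕ => y - (y - x) / ((n : ℝ) + 3)) atTop (𝓝 y) := by
    simpa using hdl.const_sub y
  have hsub : Ioo (0:ℝ) 1 ⊆ Icc 0 1 := Ioo_subset_Icc_self
  have hhu : Tendsto (fun n : ℕ => h (x + (y - x) / ((n : ℝ) + 3))) atTop (𝓝 (h x)) :=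
    ((hcont x ⟨hx0, hx1⟩).tendsto).comp
      (tendsto_nhdsWithin_of_tendsto_nhds_of_eventually_within _ hul
        (Eventually.of_forall fun n => hsub (humem n)))
  have hhv : Tendsto (fun n : ℕ => h (y - (y - x) / ((n : ℝ) + 3))) atTop (𝓝 (h y)) :=
    ((hcont y ⟨hy0, hy1⟩).tendsto).comp
      (tendsto_nhdsWithin_of_tendsto_nhds_of_eventually_within _ hvl
        (Eventually.of_forall fun n => hsub (hvmem n)))
  exact le_of_tendsto ((hhu.add hhv).div_const 2) (Eventually.of_forall hineq)

/-- Existence and uniqueness of the DT probability premium λ, and its positivity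
under strict concavity of the probability weighting function. -/
theorem dt_probability_premium_exists_unique_pos
    (h : ℝ → ℝ) (p₀ ε : ℝ)
    (hmap : ∀ p ∈ Icc (0:ℝ) 1, h p ∈ Icc (0:ℝ) 1)
    (hmono : StrictMonoOn h (Icc 0 1))
    (hcont : ContinuousOn h (Icc 0 1))
    (h0 : h 0 = 0) (h1 : h 1 = 1)
    (hε : 0 < ε) (hεle : ε ≤ min p₀ (1 - p₀)) (hp : p₀ < 1) :
    (∃! lam : ℝ, lam ∈ Icc (-ε) ε ∧
        h (p₀ - ε) - 2 * h (p₀ - lam) + h (p₀ + ε) = 0) ∧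
    (StrictConcaveOn ℝ (Ioo 0 1) h →
      ∀ lam ∈ Icc (-ε) ε,
        h (p₀ - ε) - 2 * h (p₀ - lam) + h (p₀ + ε) = 0 → 0 < lam) := by
  have hεp : ε ≤ p₀ := le_trans hεle (min_le_left _ _)
  have hεp' : ε ≤ 1 - p₀ := le_trans hεle (min_le_right _ _)
  have ha0 : (0:ℝ) ≤ p₀ - ε := by linarith
  have hb1 : p₀ + ε ≤ 1 := by linarith
  have hab : p₀ - ε < p₀ + ε := by linarith
  have hamem : p₀ - ε ∈ Icc (0:ℝ) 1 := ⟨ha0, by linarith⟩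
  have hbmem : p₀ + ε ∈ Icc (0:ℝ) 1 := ⟨by linarith, hb1⟩
  have hsubIcc : Icc (p₀ - ε) (p₀ + ε) ⊆ Icc (0:ℝ) 1 := Icc_subset_Icc ha0 hb1
  have hhab : h (p₀ - ε) < h (p₀ + ε) := hmono hamem hbmem hab
  -- existence via IVT
  have hivt : Icc (h (p₀ - ε)) (h (p₀ + ε)) ⊆ h '' Icc (p₀ - ε) (p₀ + ε) :=
    intermediate_value_Icc hab.le (hcont.mono hsubIcc)
  have hmemIcc : (h (p₀ - ε) + h (p₀ + ε)) / 2 ∈ Icc (h (p₀ - ε)) (h (p₀ + ε)) :=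
    ⟨by linarith, by linarith⟩
  obtain ⟨x, hxmem, hxval⟩ := hivt hmemIcc
  refine ⟨⟨p₀ - x, ⟨⟨by linarith [hxmem.2], by linarith [hxmem.1]⟩, by
      have : p₀ - (p₀ - x) = x := by ring
      rw [this, hxval]; ring⟩, ?_⟩, ?_⟩
  · -- uniqueness
    rintro y ⟨⟨hy1, hy2⟩, hyeq⟩
    have hymem : p₀ - y ∈ Icc (p₀ - ε) (p₀ + ε) := ⟨by linarith, by linarith⟩
    have hyval : h (p₀ - y) = (h (p₀ - ε) + h (p₀ + ε)) / 2 := by linarith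
    have : p₀ - y = x := hmono.injOn (hsubIcc hymem) (hsubIcc hxmem)
      (by rw [hyval, hxval])
    linarith
  · -- positivity under strict concavity
    intro hconc lam ⟨hl1, hl2⟩ heq
    have hp0mem : p₀ ∈ Icc (0:ℝ) 1 := ⟨by linarith, hp.le⟩
    -- key: h (p₀-ε) + h (p₀+ε) < 2 * h p₀
    have hc : (p₀ - ε + p₀) / 2 ∈ Ioo (0:ℝ) 1 := ⟨by linarith, by linarith⟩
    have hd : (p₀ + (p₀ + ε)) / 2 ∈ Ioo (0:ℝ) 1 := ⟨by linarith, by linarith⟩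
    have hcd : (p₀ - ε + p₀) / 2 ≠ (p₀ + (p₀ + ε)) / 2 := by
      intro hcontra
      have : ε = 0 := by linarith [hcontra]
      linarith
    have hcle := mid_concave_aux h hcont hconc hamem hp0mem (by linarith)
    have hdle := mid_concave_aux h hcont hconc hp0mem hbmem (by linarith)
    have hstrict := hconc.2 hc hd hcd
      (by norm_num : (0:ℝ) < 1/2) (by norm_num : (0:ℝ) < 1/2) (by norm_num)
    rw [smul_eq_mul, smul_eq_mul, smul_eq_mul, smul_eq_mul] at hstrict
    have hmid : 1 / 2 * ((p₀ - ε + p₀) / 2) + 1 / 2 * ((p₀ + (p₀ + ε)) / 2) = p₀ := by ring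
    rw [hmid] at hstrict
    have hkey : h (p₀ - ε) + h (p₀ + ε) < 2 * h p₀ := by linarith
    -- conclude
    have hlmem : p₀ - lam ∈ Icc (0:ℝ) 1 := hsubIcc ⟨by linarith, by linarith⟩
    have : h (p₀ - lam) < h p₀ := by linarith
    have := (hmono.lt_iff_lt hlmem hp0mem).mp this
    linarith
end

section
/- Let h : [0,1] → [0,1] be three times continuously differentiable at p₀ ∈ (0,1) with h'(p₀) > 0. Then as ε → 0⁺, (1/2) · ((h(p₀) - h(p₀-ε)) - (h(p₀+ε) - h(p₀))) / (h(p₀+ε) - h(p₀-ε)) = -(ε/4) · h''(p₀)/h'(p₀) + o(ε²). -/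
open Set Filter Asymptotics

open scoped Topology Nat

/-!
By Taylor's theorem at `p₀`, the central differences satisfy
`h(p₀+ε) + h(p₀-ε) - 2h(p₀) = h''(p₀) ε² + o(ε³)` (the cubic terms cancel) and
`D(ε) := h(p₀+ε) - h(p₀-ε) = 2h'(p₀) ε + o(ε²)`. Over the common denominator `4 h'(p₀) D(ε)`,
which is of exact order `ε` because `h'(p₀) > 0`, the leading terms of the numerator cancel and
what remains is `o(ε³)`; dividing gives `o(ε²)`.
-/

theorem ContDiffAt.isLittleO_taylor {E : Type*} [NormedAddCommGroup E] [NormedSpace ℝ E]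
    {f : ℝ → E} {x₀ : ℝ} {n : ℕ} (hf : ContDiffAt ℝ n f x₀) :
    (fun x => f x - ∑ k ∈ Finset.range (n + 1), ((k ! : ℝ)⁻¹ * (x - x₀) ^ k) • iteratedDeriv k f x₀)
      =o[𝓝 x₀] fun x => (x - x₀) ^ n := by
  obtain ⟨u, hu, hfu⟩ := hf.contDiffOn le_rfl (by simp)
  obtain ⟨δ, hδ, hball⟩ := Metric.mem_nhds_iff.mp hu
  have hx₀ : x₀ ∈ Metric.ball x₀ δ := Metric.mem_ball_self hδ
  have := taylor_isLittleO (convex_ball x₀ δ) hx₀ (hfu.mono hball)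
  rw [Metric.isOpen_ball.nhdsWithin_eq hx₀] at this
  refine this.congr_left fun x => ?_
  simp only [taylor_within_apply, iteratedDerivWithin_of_isOpen Metric.isOpen_ball hx₀]

theorem ContDiffAt.isLittleO_taylor_comp_add {f : ℝ → ℝ} {x₀ : ℝ} {n : ℕ}
    (hf : ContDiffAt ℝ n f x₀) :
    (fun ε => f (x₀ + ε) - ∑ k ∈ Finset.range (n + 1), iteratedDeriv k f x₀ / k ! * ε ^ k)
      =o[𝓝 0] fun ε => ε ^ n := by
  have hshift : Tendsto (x₀ + ·) (𝓝 0) (𝓝 x₀) := by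
    simpa using (continuous_const_add x₀).tendsto 0
  refine (hf.isLittleO_taylor.comp_tendsto hshift).congr (fun ε => ?_) fun ε => ?_
  · simp only [Function.comp_apply, add_sub_cancel_left, smul_eq_mul]
    congr 1
    exact Finset.sum_congr rfl fun k _ => by ring
  · simp

theorem Asymptotics.IsLittleO.comp_neg_pow {E : Type*} [Norm E] {f : ℝ → E} {n : ℕ}
    (hf : f =o[𝓝 0] fun ε => ε ^ n) : (fun ε => f (-ε)) =o[𝓝 0] fun ε => ε ^ n := by
  have := hf.comp_tendsto (by simpa using (continuous_neg (G := ℝ)).tendsto 0)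
  exact this.trans_isBigO (IsBigO.of_bound' (.of_forall fun ε => by simp [Function.comp_apply]))

theorem ContDiffAt.isLittleO_central_difference {f : ℝ → ℝ} {x₀ : ℝ} (hf : ContDiffAt ℝ 2 f x₀) :
    (fun ε => f (x₀ + ε) - f (x₀ - ε) - 2 * deriv f x₀ * ε) =o[𝓝 0] fun ε => ε ^ 2 := by
  have R := hf.isLittleO_taylor_comp_add
  simp only [Finset.sum_range_succ, Finset.sum_range_zero, iteratedDeriv_succ,
    iteratedDeriv_zero] at R
  refine (R.sub R.comp_neg_pow).congr_left fun ε => ?_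
  simp only [← sub_eq_add_neg, Nat.factorial]
  push_cast
  ring

theorem ContDiffAt.isLittleO_central_second_difference {f : ℝ → ℝ} {x₀ : ℝ}
    (hf : ContDiffAt ℝ 3 f x₀) :
    (fun ε => f (x₀ + ε) + f (x₀ - ε) - 2 * f x₀ - deriv (deriv f) x₀ * ε ^ 2)
      =o[𝓝 0] fun ε => ε ^ 3 := by
  have R := hf.isLittleO_taylor_comp_add
  simp only [Finset.sum_range_succ, Finset.sum_range_zero, iteratedDeriv_succ,
    iteratedDeriv_zero] at R
  refine (R.add R.comp_neg_pow).congr_left fun ε => ?_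
  simp only [← sub_eq_add_neg, Nat.factorial]
  push_cast
  ring

theorem eventually_mul_le_of_sub_isLittleO {D : ℝ → ℝ} {a : ℝ} (ha : 0 < a)
    (hD : (fun ε => D ε - 2 * a * ε) =o[𝓝 0] fun ε => ε) : ∀ᶠ ε in 𝓝[>] 0, a * ε ≤ D ε := by
  filter_upwards [nhdsWithin_le_nhds (hD.def ha), self_mem_nhdsWithin] with ε hε (hpos : 0 < ε)
  rw [Real.norm_eq_abs, Real.norm_eq_abs, abs_of_pos hpos] at hε
  linarith [neg_abs_le (D ε - 2 * a * ε)]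

theorem dt_risk_premium_local_general
    (h : ℝ → ℝ) (p₀ : ℝ)
    (hC : ContDiffAt ℝ 3 h p₀)
    (hd : 0 < deriv h p₀) :
    (fun ε : ℝ =>
        (1/2) * ((h p₀ - h (p₀ - ε)) - (h (p₀ + ε) - h p₀)) /
          (h (p₀ + ε) - h (p₀ - ε))
        + ε / 4 * (deriv (deriv h) p₀ / deriv h p₀))
      =o[nhdsWithin 0 (Ioi 0)] (fun ε : ℝ => ε ^ 2) := by
  set c₁ := deriv h p₀
  set c₂ := deriv (deriv h) p₀
  set S := fun ε => h (p₀ + ε) + h (p₀ - ε) - 2 * h p₀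
  set D := fun ε => h (p₀ + ε) - h (p₀ - ε)
  have hS : (fun ε => S ε - c₂ * ε ^ 2) =o[𝓝 0] fun ε => ε ^ 3 :=
    hC.isLittleO_central_second_difference
  have hD : (fun ε => D ε - 2 * c₁ * ε) =o[𝓝 0] fun ε => ε ^ 2 :=
    (hC.of_le (by norm_num)).isLittleO_central_difference
  have hN : (fun ε => -2 * c₁ * (S ε - c₂ * ε ^ 2) + c₂ * ε * (D ε - 2 * c₁ * ε))
      =o[𝓝 0] fun ε => ε ^ 3 := by
    refine (hS.const_mul_left _).add ?_
    exact (((isBigO_refl (fun ε : ℝ => ε) _).const_mul_left c₂).mul_isLittleO hD).congr_right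
      fun ε => by ring
  have hDlow : ∀ᶠ ε in 𝓝[>] 0, c₁ * ε ≤ D ε :=
    eventually_mul_le_of_sub_isLittleO hd
      (hD.trans (by simpa using isLittleO_pow_pow (𝕜 := ℝ) one_lt_two))
  have hDinv : (fun ε => (4 * c₁ * D ε)⁻¹) =O[𝓝[>] 0] fun ε => ε⁻¹ := by
    refine IsBigO.of_bound (4 * c₁ ^ 2)⁻¹ ?_
    filter_upwards [hDlow, self_mem_nhdsWithin] with ε hε (hpos : 0 < ε)
    have hDpos : 0 < 4 * c₁ * D ε := mul_pos (by positivity) ((mul_pos hd hpos).trans_le hε)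
    rw [norm_inv, norm_inv, Real.norm_eq_abs, Real.norm_eq_abs, abs_of_pos hpos, abs_of_pos hDpos,
      ← mul_inv]
    exact inv_anti₀ (by positivity) (by nlinarith)
  refine ((hN.mono nhdsWithin_le_nhds).mul_isBigO hDinv).congr' ?_ ?_
  · filter_upwards [hDlow, self_mem_nhdsWithin] with ε hε (hpos : 0 < ε)
    have : 0 < D ε := (mul_pos hd hpos).trans_le hε
    simp only [S, D] at this ⊢
    field_simp
    ring
  · filter_upwards [self_mem_nhdsWithin] with ε (hpos : 0 < ε)
    field_simp

/-- Local approximation of the DT risk premium: ρ(ε) = -(ε/4)·h''(p₀)/h'(p₀) + o(ε²). -/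
theorem dt_risk_premium_local
    (h : ℝ → ℝ) (p₀ : ℝ) (hp : p₀ ∈ Ioo (0:ℝ) 1)
    (hmap : ∀ p ∈ Icc (0:ℝ) 1, h p ∈ Icc (0:ℝ) 1)
    (hC : ContDiffAt ℝ 3 h p₀)
    (hd : 0 < deriv h p₀) :
    (fun ε : ℝ =>
        (1/2) * ((h p₀ - h (p₀ - ε)) - (h (p₀ + ε) - h p₀)) /
          (h (p₀ + ε) - h (p₀ - ε))
        + ε / 4 * (deriv (deriv h) p₀ / deriv h p₀))
      =o[nhdsWithin 0 (Ioi 0)] (fun ε : ℝ => ε ^ 2) :=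
  dt_risk_premium_local_general h p₀ hC hd
end

section
/- Let h : [0,1] → [0,1] be three times continuously differentiable at p₀ ∈ (0,1) with h'(p₀) > 0, and for small ε > 0 let λ(ε) be the unique solution of h(p₀-ε) - 2·h(p₀-λ) + h(p₀+ε) = 0 near 0. Then λ(ε) = -(ε²/2) · h''(p₀)/h'(p₀) + o(ε²) as ε → 0⁺. -/
open Set Filter Asymptotics Topology

/-! Expanding the defining equation, the symmetric second difference
`h (p₀ + ε) + h (p₀ - ε) - 2 h p₀ = ε² h''(p₀) + o(ε²)` equals `2 (h (p₀ - λ) - h p₀) = -2 λ h'(p₀) + o(λ)`.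
As `h'(p₀) ≠ 0`, this first forces `λ = O(ε²)`; then `o(λ) = o(ε²)` and the equation can be solved
for `λ` up to `o(ε²)`. -/

variable {E : Type*} [NormedAddCommGroup E] [NormedSpace ℝ E]

theorem ContDiffAt.isLittleO_taylor_two {f : ℝ → E} {x : ℝ} (hf : ContDiffAt ℝ 2 f x) :
    (fun t : ℝ => f (x + t) - f x - t • deriv f x - (t ^ 2 / 2) • deriv (deriv f) x)
      =o[𝓝 0] fun t => t ^ 2 := by
  obtain ⟨u, hu, hfu⟩ := hf.contDiffOn le_rfl (by simp)
  obtain ⟨r, hr, hball⟩ := Metric.mem_nhds_iff.1 hu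
  have hopen : IsOpen (Metric.ball x r) := Metric.isOpen_ball
  have hx : x ∈ Metric.ball x r := Metric.mem_ball_self hr
  have htaylor := taylor_isLittleO (convex_ball x r) hx (hfu.mono hball)
  rw [hopen.nhdsWithin_eq hx] at htaylor
  have hshift : Tendsto (fun t : ℝ => x + t) (𝓝 0) (𝓝 x) := by
    simpa using (continuous_const_add x).tendsto 0
  refine (htaylor.comp_tendsto hshift).congr (fun t => ?_) (fun t => by simp)
  simp only [taylor_within_apply, Finset.sum_range_succ, Finset.sum_range_zero,
    iteratedDerivWithin_of_isOpen hopen hx, iteratedDeriv_succ, iteratedDeriv_zero,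
    Nat.factorial, Function.comp_apply, add_sub_cancel_left]
  module

theorem ContDiffAt.isLittleO_symmetric_second_difference {f : ℝ → E} {x : ℝ}
    (hf : ContDiffAt ℝ 2 f x) :
    (fun t : ℝ => f (x + t) + f (x - t) - (2 : ℝ) • f x - t ^ 2 • deriv (deriv f) x)
      =o[𝓝 0] fun t => t ^ 2 := by
  have htaylor := hf.isLittleO_taylor_two
  have hneg := htaylor.comp_tendsto (continuous_neg.tendsto' 0 0 neg_zero)
  refine (htaylor.add (hneg.congr_right fun t => by simp)).congr_left fun t => ?_
  simp only [Function.comp_apply, neg_sq, ← sub_eq_add_neg]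
  module

theorem Asymptotics.isLittleO_sub_of_eventually_linear_eq {α 𝕜 : Type*} [NormedField 𝕜]
    {l : Filter α} {u r g s : α → 𝕜} {a b : 𝕜} (ha : a ≠ 0) (hr : r =o[l] u) (hs : s =o[l] g)
    (heq : ∀ᶠ y in l, a * u y + r y = b * g y + s y) :
    (fun y => u y - b / a * g y) =o[l] g := by
  have hu : u =O[l] g :=
    calc u =O[l] fun y => a * u y := isBigO_self_const_mul ha u l
      _ =O[l] fun y => r y + a * u y :=
        (hr.trans_isBigO (isBigO_self_const_mul ha u l)).right_isBigO_add
      _ =ᶠ[l] fun y => b * g y + s y := heq.mono fun y hy => by simp only [add_comm (r y), hy]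
      _ =O[l] g := ((isBigO_refl g l).const_mul_left b).add hs.isBigO
  refine ((hs.sub (hr.trans_isBigO hu)).const_mul_left a⁻¹).congr' ?_ EventuallyEq.rfl
  filter_upwards [heq] with y hy
  field_simp
  linear_combination -hy

theorem dt_probability_premium_local_general
    (h : ℝ → ℝ) (p₀ : ℝ)
    (hC : ContDiffAt ℝ 3 h p₀)
    (hd : 0 < deriv h p₀)
    (lam : ℝ → ℝ)
    (hlam : ∀ᶠ ε in nhdsWithin 0 (Ioi 0),
      h (p₀ - ε) - 2 * h (p₀ - lam ε) + h (p₀ + ε) = 0)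
    (hlam0 : Filter.Tendsto lam (nhdsWithin 0 (Ioi 0)) (nhds 0)) :
    (fun ε : ℝ => lam ε + ε ^ 2 / 2 * (deriv (deriv h) p₀ / deriv h p₀))
      =o[nhdsWithin 0 (Ioi 0)] (fun ε : ℝ => ε ^ 2) := by
  set A := deriv h p₀
  set B := deriv (deriv h) p₀
  have hsecond := ((hC.of_le (by norm_num)).isLittleO_symmetric_second_difference).mono
    (nhdsWithin_le_nhds (s := Ioi 0))
  have hderiv : HasDerivAt h A p₀ := (hC.differentiableAt (by norm_num)).hasDerivAt
  have hfirst : (fun ε => h (p₀ + -lam ε) - h p₀ - -lam ε * A) =o[𝓝[>] 0] fun ε => -lam ε :=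
    (hasDerivAt_iff_isLittleO_nhds_zero.1 hderiv).comp_tendsto (by simpa using hlam0.neg)
  have hlin := isLittleO_sub_of_eventually_linear_eq (a := 2 * A) (b := -B) (by positivity)
    (hfirst.neg_right.const_mul_left (-2)) hsecond.neg_left ?_
  · refine hlin.congr_left fun ε => ?_
    field_simp
    ring
  filter_upwards [hlam] with ε hε
  simp only [smul_eq_mul, ← sub_eq_add_neg]
  linear_combination hε

/-- Local approximation of the DT probability premium:
λ(ε) = -(ε²/2)·h''(p₀)/h'(p₀) + o(ε²). -/
theorem dt_probability_premium_local
    (h : ℝ → ℝ) (p₀ : ℝ) (hp : p₀ ∈ Ioo (0:ℝ) 1)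
    (hmap : ∀ p ∈ Icc (0:ℝ) 1, h p ∈ Icc (0:ℝ) 1)
    (hC : ContDiffAt ℝ 3 h p₀)
    (hd : 0 < deriv h p₀)
    (lam : ℝ → ℝ)
    (hlam : ∀ᶠ ε in nhdsWithin 0 (Ioi 0),
      h (p₀ - ε) - 2 * h (p₀ - lam ε) + h (p₀ + ε) = 0)
    (hlam0 : Filter.Tendsto lam (nhdsWithin 0 (Ioi 0)) (nhds 0)) :
    (fun ε : ℝ => lam ε + ε ^ 2 / 2 * (deriv (deriv h) p₀ / deriv h p₀))
      =o[nhdsWithin 0 (Ioi 0)] (fun ε : ℝ => ε ^ 2) :=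
  dt_probability_premium_local_general h p₀ hC hd lam hlam hlam0
end

section
/- Let h₁, h₂ : [0,1] → [0,1] be twice continuously differentiable, strictly increasing, onto, with h₁(0)=h₂(0)=0 and h₁(1)=h₂(1)=1. Then -h₂''(p)/h₂'(p) ≥ -h₁''(p)/h₁'(p) for all p ∈ (0,1) if and only if h₂ ∘ h₁⁻¹ is concave on (0,1). -/
/-!
With `g = h₁⁻¹` and `φ = h₂ ∘ g`, the inverse function theorem gives `φ' = (h₂' / h₁') ∘ g` on
`(0, 1)`. As `g` is an increasing bijection of `(0, 1)`, `φ` is concave iff `φ'` is antitone iff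
`h₂' / h₁'` is antitone, i.e. iff `(h₂' / h₁')' ≤ 0`; for positive `h₁'`, `h₂'` this is the sign
condition `h₂'' / h₂' ≤ h₁'' / h₁'`.
-/

open Set Filter

theorem StrictMonoOn.strictMonoOn_of_leftInvOn {α β : Type*} [LinearOrder α] [Preorder β]
    {f : α → β} {g : β → α} {s : Set α} {t : Set β} (hf : StrictMonoOn f s)
    (hft : SurjOn f s t) (hgf : LeftInvOn g f s) : StrictMonoOn g t := by
  have hgt : MapsTo g t s := hgf.mapsTo hft
  have hfg : RightInvOn g f t := hgf.rightInvOn_image.mono hft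
  intro x hx y hy hxy
  by_contra! hyx
  have := (hf.le_iff_le (hgt hy) (hgt hx)).2 hyx
  rw [hfg hx, hfg hy] at this
  exact hxy.not_ge this

theorem StrictMonoOn.mapsTo_Ioo_of_leftInvOn {α β : Type*} [LinearOrder α] [Preorder β]
    {f : α → β} {g : β → α} {a b : α} (hab : a ≤ b) (hf : StrictMonoOn f (Icc a b))
    (hft : SurjOn f (Icc a b) (Icc (f a) (f b))) (hgf : LeftInvOn g f (Icc a b)) :
    MapsTo g (Ioo (f a) (f b)) (Ioo a b) := by
  simpa only [hgf (left_mem_Icc.2 hab), hgf (right_mem_Icc.2 hab)]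
    using (hf.strictMonoOn_of_leftInvOn hft hgf).mapsTo_Ioo

theorem antitoneOn_comp_iff_of_leftInvOn {α β γ : Type*} [Preorder α] [Preorder β] [Preorder γ]
    {F : α → γ} {f : α → β} {g : β → α} {s : Set α} {t : Set β} (hf : MonotoneOn f s)
    (hg : MonotoneOn g t) (hfs : MapsTo f s t) (hgt : MapsTo g t s) (hgf : LeftInvOn g f s) :
    AntitoneOn (F ∘ g) t ↔ AntitoneOn F s :=
  ⟨fun h ↦ (h.comp_MonotoneOn hf hfs).congr fun x hx ↦ by simp [hgf hx],
    fun h ↦ h.comp_MonotoneOn hg hgt⟩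

section Derivatives

variable {f f' : ℝ → ℝ} {s : Set ℝ}

theorem antitoneOn_iff_forall_hasDerivAt_nonpos (hs : IsOpen s) (hsc : Convex ℝ s)
    (hf : ∀ x ∈ s, HasDerivAt f (f' x) x) : AntitoneOn f s ↔ ∀ x ∈ s, f' x ≤ 0 := by
  refine ⟨fun hanti x hx ↦
    (hf x hx).hasDerivWithinAt.nonpos_of_antitoneOn (hs.preperfect x hx) hanti, fun hneg ↦ ?_⟩
  refine antitoneOn_of_deriv_nonpos hsc (HasDerivAt.continuousOn hf) ?_ ?_ <;>
    rw [hs.interior_eq]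
  · exact fun x hx ↦ (hf x hx).differentiableAt.differentiableWithinAt
  · exact fun x hx ↦ (hf x hx).deriv ▸ hneg x hx

theorem concaveOn_iff_antitoneOn_of_hasDerivAt (hs : IsOpen s) (hsc : Convex ℝ s)
    (hf : ∀ x ∈ s, HasDerivAt f (f' x) x) : ConcaveOn ℝ s f ↔ AntitoneOn f' s := by
  have hderiv : EqOn (deriv f) f' s := fun x hx ↦ (hf x hx).deriv
  rw [← hderiv.congr_antitoneOn]
  refine ⟨fun hconc ↦ hconc.antitoneOn_deriv fun x hx ↦ (hf x hx).differentiableAt,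
    fun hanti ↦ ?_⟩
  refine AntitoneOn.concaveOn_of_deriv hsc (HasDerivAt.continuousOn hf) ?_ ?_ <;>
    rw [hs.interior_eq]
  · exact fun x hx ↦ (hf x hx).differentiableAt.differentiableWithinAt
  · exact hanti

theorem antitoneOn_div_iff_div_le_div {u v u' v' : ℝ → ℝ} (hs : IsOpen s) (hsc : Convex ℝ s)
    (hu : ∀ x ∈ s, HasDerivAt u (u' x) x) (hv : ∀ x ∈ s, HasDerivAt v (v' x) x)
    (hupos : ∀ x ∈ s, 0 < u x) (hvpos : ∀ x ∈ s, 0 < v x) :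
    AntitoneOn (u / v) s ↔ ∀ x ∈ s, u' x / u x ≤ v' x / v x := by
  rw [antitoneOn_iff_forall_hasDerivAt_nonpos hs hsc
    fun x hx ↦ (hu x hx).div (hv x hx) (hvpos x hx).ne']
  refine forall₂_congr fun x hx ↦ ?_
  have := hvpos x hx
  rw [div_le_iff₀ (by positivity), zero_mul, sub_nonpos, div_le_div_iff₀ (hupos x hx) this,
    mul_comm (u x)]

theorem StrictMonoOn.hasDerivAt_of_invOn {g : ℝ → ℝ} {t : Set ℝ} {y f'₀ : ℝ}
    (hg : StrictMonoOn g t) (hs : IsOpen s) (ht : IsOpen t) (hinv : InvOn g f s t)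
    (hfs : MapsTo f s t) (hy : y ∈ t) (hgy : g y ∈ s) (hf : HasDerivAt f f'₀ (g y))
    (hf'₀ : f'₀ ≠ 0) : HasDerivAt g f'₀⁻¹ y :=
  hf.of_local_left_inverse
    (hg.continuousAt_of_image_mem_nhds (ht.mem_nhds hy)
      (mem_of_superset (hs.mem_nhds hgy) (hinv.1.surjOn hfs)))
    hf'₀ (eventually_of_mem (ht.mem_nhds hy) hinv.2)

theorem ContDiff.hasDerivAt_deriv {n : WithTop ℕ∞} (hf : ContDiff ℝ n f) (hn : 2 ≤ n) (x : ℝ) :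
    HasDerivAt (deriv f) (deriv (deriv f) x) x :=
  (((hf.of_le hn).deriv' (n := 1)).differentiable one_ne_zero x).hasDerivAt

end Derivatives

theorem dt_index_iff_concave_transform_general
    (h₁ h₂ g : ℝ → ℝ)
    (hC1 : ContDiff ℝ 2 h₁) (hC2 : ContDiff ℝ 2 h₂)
    (hm1 : StrictMonoOn h₁ (Icc 0 1))
    (hs1 : SurjOn h₁ (Icc 0 1) (Icc 0 1))
    (h10 : h₁ 0 = 0) (h11 : h₁ 1 = 1)
    (hd1 : ∀ p ∈ Icc (0:ℝ) 1, 0 < deriv h₁ p)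
    (hd2 : ∀ p ∈ Icc (0:ℝ) 1, 0 < deriv h₂ p)
    (hg : ∀ p ∈ Icc (0:ℝ) 1, g (h₁ p) = p) :
    (∀ p ∈ Ioo (0:ℝ) 1,
        -(deriv (deriv h₂) p) / deriv h₂ p ≥ -(deriv (deriv h₁) p) / deriv h₁ p) ↔
    ConcaveOn ℝ (Ioo 0 1) (h₂ ∘ g) := by
  have hIoo : Ioo (0:ℝ) 1 ⊆ Icc 0 1 := Ioo_subset_Icc_self
  have hgmono : StrictMonoOn g (Icc 0 1) := hm1.strictMonoOn_of_leftInvOn hs1 hg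
  have hh₁Ioo : MapsTo h₁ (Ioo 0 1) (Ioo 0 1) := by simpa only [h10, h11] using hm1.mapsTo_Ioo
  have hgIoo : MapsTo g (Ioo 0 1) (Ioo 0 1) := by
    simpa only [h10, h11] using hm1.mapsTo_Ioo_of_leftInvOn zero_le_one (by rwa [h10, h11]) hg
  have hinv : InvOn g h₁ (Ioo 0 1) (Ioo 0 1) :=
    ⟨LeftInvOn.mono hg hIoo, (LeftInvOn.rightInvOn_image hg |>.mono hs1).mono hIoo⟩
  have hφ : ∀ y ∈ Ioo (0:ℝ) 1, HasDerivAt (h₂ ∘ g) ((deriv h₂ / deriv h₁) (g y)) y :=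
    fun y hy ↦ by
      have hg' : HasDerivAt g (deriv h₁ (g y))⁻¹ y :=
        (hgmono.mono hIoo).hasDerivAt_of_invOn isOpen_Ioo isOpen_Ioo hinv hh₁Ioo hy (hgIoo hy)
          (hC1.differentiable two_ne_zero _).hasDerivAt (hd1 _ (hIoo (hgIoo hy))).ne'
      exact ((hC2.differentiable two_ne_zero _).hasDerivAt.comp y hg').congr_deriv
        (div_eq_mul_inv _ _).symm
  simp only [ge_iff_le, neg_div, neg_le_neg_iff]
  calc _ ↔ AntitoneOn (deriv h₂ / deriv h₁) (Ioo 0 1) :=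
        (antitoneOn_div_iff_div_le_div isOpen_Ioo (convex_Ioo 0 1)
          (fun x _ ↦ hC2.hasDerivAt_deriv le_rfl x) (fun x _ ↦ hC1.hasDerivAt_deriv le_rfl x)
          (fun x hx ↦ hd2 x (hIoo hx)) (fun x hx ↦ hd1 x (hIoo hx))).symm
    _ ↔ AntitoneOn ((deriv h₂ / deriv h₁) ∘ g) (Ioo 0 1) :=
        (antitoneOn_comp_iff_of_leftInvOn (hm1.monotoneOn.mono hIoo)
          (hgmono.monotoneOn.mono hIoo) hh₁Ioo hgIoo hinv.1).symm
    _ ↔ ConcaveOn ℝ (Ioo 0 1) (h₂ ∘ g) :=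
        (concaveOn_iff_antitoneOn_of_hasDerivAt isOpen_Ioo (convex_Ioo 0 1) hφ).symm

/-- The dual local index of absolute risk aversion -h''/h' dominates pointwise
iff h₂ ∘ h₁⁻¹ is concave. -/
theorem dt_index_iff_concave_transform
    (h₁ h₂ g : ℝ → ℝ)
    (hC1 : ContDiff ℝ 2 h₁) (hC2 : ContDiff ℝ 2 h₂)
    (hm1 : StrictMonoOn h₁ (Icc 0 1)) (hm2 : StrictMonoOn h₂ (Icc 0 1))
    (hs1 : SurjOn h₁ (Icc 0 1) (Icc 0 1)) (hs2 : SurjOn h₂ (Icc 0 1) (Icc 0 1))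
    (hmap1 : MapsTo h₁ (Icc 0 1) (Icc 0 1)) (hmap2 : MapsTo h₂ (Icc 0 1) (Icc 0 1))
    (h10 : h₁ 0 = 0) (h11 : h₁ 1 = 1) (h20 : h₂ 0 = 0) (h21 : h₂ 1 = 1)
    (hd1 : ∀ p ∈ Icc (0:ℝ) 1, 0 < deriv h₁ p)
    (hd2 : ∀ p ∈ Icc (0:ℝ) 1, 0 < deriv h₂ p)
    (hg : ∀ p ∈ Icc (0:ℝ) 1, g (h₁ p) = p) :
    (∀ p ∈ Ioo (0:ℝ) 1,
        -(deriv (deriv h₂) p) / deriv h₂ p ≥ -(deriv (deriv h₁) p) / deriv h₁ p) ↔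
    ConcaveOn ℝ (Ioo 0 1) (h₂ ∘ g) :=
  dt_index_iff_concave_transform_general h₁ h₂ g hC1 hC2 hm1 hs1 h10 h11 hd1 hd2 hg
end

section
/- Let h₁, h₂ : [0,1] → [0,1] be strictly increasing, continuous, onto, with hᵢ(0)=0, hᵢ(1)=1. If h₂ ∘ h₁⁻¹ is concave on [0,1], then for all 0 < p < q ≤ r < s < 1, (h₂(s) - h₂(r))/(h₂(q) - h₂(p)) ≤ (h₁(s) - h₁(r))/(h₁(q) - h₁(p)). Conversely, this family of inequalities implies that h₂ ∘ h₁⁻¹ is concave. -/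
open Set Filter Topology

/-- Concavity of h₂ ∘ h₁⁻¹ is equivalent to the cross-difference-ratio inequality. -/
theorem dt_concave_transform_iff_ratio
    (h₁ h₂ g : ℝ → ℝ)
    (hm1 : StrictMonoOn h₁ (Icc 0 1)) (hm2 : StrictMonoOn h₂ (Icc 0 1))
    (hc1 : ContinuousOn h₁ (Icc 0 1)) (hc2 : ContinuousOn h₂ (Icc 0 1))
    (hs1 : SurjOn h₁ (Icc 0 1) (Icc 0 1)) (hs2 : SurjOn h₂ (Icc 0 1) (Icc 0 1))
    (hmap1 : MapsTo h₁ (Icc 0 1) (Icc 0 1)) (hmap2 : MapsTo h₂ (Icc 0 1) (Icc 0 1))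
    (h10 : h₁ 0 = 0) (h11 : h₁ 1 = 1) (h20 : h₂ 0 = 0) (h21 : h₂ 1 = 1)
    (hg : ∀ p ∈ Icc (0:ℝ) 1, g (h₁ p) = p) :
    ConcaveOn ℝ (Icc 0 1) (h₂ ∘ g) ↔
    ∀ p q r s : ℝ, 0 < p → p < q → q ≤ r → r < s → s < 1 →
      (h₂ s - h₂ r) / (h₂ q - h₂ p) ≤ (h₁ s - h₁ r) / (h₁ q - h₁ p) := by
  have h0I : (0:ℝ) ∈ Icc (0:ℝ) 1 := by norm_num
  have h1I : (1:ℝ) ∈ Icc (0:ℝ) 1 := by norm_num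
  set f : ℝ → ℝ := h₂ ∘ g with hfdef
  have hfx : ∀ p ∈ Icc (0:ℝ) 1, f (h₁ p) = h₂ p := by
    intro p hp
    simp only [hfdef, Function.comp_apply, hg p hp]
  constructor
  · -- concavity → ratio inequality
    intro hcon p q r s hp hpq hqr hrs hs1'
    have hpI : p ∈ Icc (0:ℝ) 1 := ⟨hp.le, by linarith⟩
    have hqI : q ∈ Icc (0:ℝ) 1 := ⟨by linarith, by linarith⟩
    have hrI : r ∈ Icc (0:ℝ) 1 := ⟨by linarith, by linarith⟩
    have hsI : s ∈ Icc (0:ℝ) 1 := ⟨by linarith, hs1'.le⟩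
    have haI := hmap1 hpI
    have hbI := hmap1 hqI
    have hcI := hmap1 hrI
    have hdI := hmap1 hsI
    have hab : h₁ p < h₁ q := hm1 hpI hqI hpq
    have hbc : h₁ q ≤ h₁ r := by
      rcases eq_or_lt_of_le hqr with h | h
      · rw [h]
      · exact (hm1 hqI hrI h).le
    have hcd : h₁ r < h₁ s := hm1 hrI hsI hrs
    have key : (f (h₁ s) - f (h₁ r)) / (h₁ s - h₁ r)
        ≤ (f (h₁ q) - f (h₁ p)) / (h₁ q - h₁ p) := by
      rcases eq_or_lt_of_le hbc with h | h
      · rw [← h]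
        exact hcon.slope_anti_adjacent haI hdI hab (h ▸ hcd)
      · calc (f (h₁ s) - f (h₁ r)) / (h₁ s - h₁ r)
            ≤ (f (h₁ r) - f (h₁ q)) / (h₁ r - h₁ q) :=
              hcon.slope_anti_adjacent hbI hdI h hcd
          _ ≤ (f (h₁ q) - f (h₁ p)) / (h₁ q - h₁ p) :=
              hcon.slope_anti_adjacent haI hcI hab h
    rw [hfx p hpI, hfx q hqI, hfx r hrI, hfx s hsI] at key
    have hB : 0 < h₂ q - h₂ p := sub_pos.2 (hm2 hpI hqI hpq)
    have hA : 0 < h₂ s - h₂ r := sub_pos.2 (hm2 hrI hsI hrs)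
    have hD : 0 < h₁ q - h₁ p := sub_pos.2 hab
    have hC : 0 < h₁ s - h₁ r := sub_pos.2 hcd
    rw [div_le_div_iff₀ hC hD] at key
    rw [div_le_div_iff₀ hB hD]
    nlinarith [key]
  · -- ratio inequality → concavity
    intro hyp
    -- basic facts about f
    have hrep : ∀ x ∈ Icc (0:ℝ) 1, ∃ p ∈ Icc (0:ℝ) 1, h₁ p = x ∧ f x = h₂ p := by
      intro x hx
      obtain ⟨p, hpI, hpx⟩ := hs1 hx
      exact ⟨p, hpI, hpx, by rw [← hpx, hfx p hpI]⟩
    have hmonof : StrictMonoOn f (Icc 0 1) := by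
      intro x hx y hy hxy
      obtain ⟨p, hpI, hpx, hfp⟩ := hrep x hx
      obtain ⟨q, hqI, hqy, hfq⟩ := hrep y hy
      have hpq : p < q := (hm1.lt_iff_lt hpI hqI).1 (by rw [hpx, hqy]; exact hxy)
      rw [hfp, hfq]
      exact hm2 hpI hqI hpq
    have hmapf : MapsTo f (Icc 0 1) (Icc 0 1) := by
      intro x hx
      obtain ⟨p, hpI, _, hfp⟩ := hrep x hx
      rw [hfp]; exact hmap2 hpI
    have hsurjf : SurjOn f (Icc 0 1) (Icc 0 1) := by
      intro y hy
      obtain ⟨p, hpI, hpy⟩ := hs2 hy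
      exact ⟨h₁ p, hmap1 hpI, by rw [hfx p hpI, hpy]⟩
    have hf0 : f 0 = 0 := by
      have := hfx 0 h0I; rw [h10] at this; rw [this, h20]
    have hf1 : f 1 = 1 := by
      have := hfx 1 h1I; rw [h11] at this; rw [this, h21]
    -- continuity of f on Icc 0 1
    have hcf : ContinuousOn f (Icc 0 1) := by
      intro a ha
      have CR : ContinuousWithinAt f (Icc 0 1 ∩ Ici a) a := by
        rcases lt_or_eq_of_le ha.2 with h1 | h1
        · have hs : Icc (0:ℝ) 1 ∈ 𝓝[≥] a := Icc_mem_nhdsGE_of_mem ⟨ha.1, h1⟩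
          have hfa1 : f a < 1 := hf1 ▸ hmonof ha h1I h1
          have hfa0 : (0:ℝ) ≤ f a := (hmapf ha).1
          have himg : f '' Icc 0 1 ∈ 𝓝[≥] f a := by
            refine mem_of_superset (Icc_mem_nhdsGE_of_mem ⟨le_refl _, hfa1⟩) ?_
            exact fun t ht => hsurjf ⟨le_trans hfa0 ht.1, ht.2⟩
          exact (hmonof.continuousWithinAt_right_of_image_mem_nhdsWithin hs himg).mono
            inter_subset_right
        · have : Icc (0:ℝ) 1 ∩ Ici a ⊆ {a} := by
            intro t ht
            have := le_antisymm (h1 ▸ ht.1.2) ht.2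
            simp [this]
          exact continuousWithinAt_singleton.mono this
      have CL : ContinuousWithinAt f (Icc 0 1 ∩ Iic a) a := by
        rcases lt_or_eq_of_le ha.1 with h1 | h1
        · have hs : Icc (0:ℝ) 1 ∈ 𝓝[≤] a := Icc_mem_nhdsLE_of_mem ⟨h1, ha.2⟩
          have hfa1 : 0 < f a := hf0 ▸ hmonof h0I ha h1
          have hfa0 : f a ≤ 1 := (hmapf ha).2
          have himg : f '' Icc 0 1 ∈ 𝓝[≤] f a := by
            refine mem_of_superset (Icc_mem_nhdsLE_of_mem ⟨hfa1, le_refl _⟩) ?_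
            exact fun t ht => hsurjf ⟨ht.1, le_trans ht.2 hfa0⟩
          exact (hmonof.continuousWithinAt_left_of_image_mem_nhdsWithin hs himg).mono
            inter_subset_right
        · have : Icc (0:ℝ) 1 ∩ Iic a ⊆ {a} := by
            intro t ht
            have := le_antisymm ht.2 (h1 ▸ ht.1.1)
            simp [this]
          exact continuousWithinAt_singleton.mono this
      have : ContinuousWithinAt f ((Icc 0 1 ∩ Iic a) ∪ (Icc 0 1 ∩ Ici a)) a := CL.union CR
      refine this.mono ?_
      intro t ht
      rcases le_total t a with h | h
      · exact Or.inl ⟨ht, h⟩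
      · exact Or.inr ⟨ht, h⟩
    -- interior slope inequality
    have Kint : ∀ x y z : ℝ, 0 < x → x < y → y < z → z < 1 →
        (f z - f y) / (z - y) ≤ (f y - f x) / (y - x) := by
      intro x y z hx0 hxy hyz hz1
      have hxI : x ∈ Icc (0:ℝ) 1 := ⟨hx0.le, by linarith⟩
      have hyI : y ∈ Icc (0:ℝ) 1 := ⟨by linarith, by linarith⟩
      have hzI : z ∈ Icc (0:ℝ) 1 := ⟨by linarith, hz1.le⟩
      obtain ⟨p, hpI, hpx, hfp⟩ := hrep x hxI
      obtain ⟨q, hqI, hqy, hfq⟩ := hrep y hyI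
      obtain ⟨r, hrI, hrz, hfr⟩ := hrep z hzI
      have hpq : p < q := (hm1.lt_iff_lt hpI hqI).1 (by rw [hpx, hqy]; exact hxy)
      have hqr : q < r := (hm1.lt_iff_lt hqI hrI).1 (by rw [hqy, hrz]; exact hyz)
      have hp0 : 0 < p := by
        rcases eq_or_lt_of_le hpI.1 with h' | h'
        · rw [← h', h10] at hpx; linarith
        · exact h'
      have hr1 : r < 1 := by
        rcases eq_or_lt_of_le hrI.2 with h' | h'
        · rw [h', h11] at hrz; linarith
        · exact h'
      have key := hyp p q q r hp0 hpq le_rfl hqr hr1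
      have hB : 0 < h₂ q - h₂ p := sub_pos.2 (hm2 hpI hqI hpq)
      have hA : 0 < h₂ r - h₂ q := sub_pos.2 (hm2 hqI hrI hqr)
      have hD : 0 < h₁ q - h₁ p := sub_pos.2 (hm1 hpI hqI hpq)
      have hC : 0 < h₁ r - h₁ q := sub_pos.2 (hm1 hqI hrI hqr)
      rw [div_le_div_iff₀ hB hD] at key
      rw [hfp, hfq, hfr, ← hpx, ← hqy, ← hrz, div_le_div_iff₀ hC hD]
      nlinarith [key]
    -- extend to z = 1
    have K1 : ∀ x ∈ Ioo (0:ℝ) 1, ∀ y z : ℝ, x < y → y < z → z ≤ 1 →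
        (f z - f y) / (z - y) ≤ (f y - f x) / (y - x) := by
      intro x hx y z hxy hyz hz1
      rcases lt_or_eq_of_le hz1 with h | h
      · exact Kint x y z hx.1 hxy hyz h
      · subst h
        have hy1 : y < 1 := hyz
        have hsub : Ioo y 1 ⊆ Icc (0:ℝ) 1 := fun t ht =>
          ⟨by linarith [ht.1, hx.1, hxy], ht.2.le⟩
        have hne : (1:ℝ) ∈ closure (Ioo y 1) := by
          rw [closure_Ioo hy1.ne]; exact ⟨hy1.le, le_refl _⟩
        haveI : (𝓝[Ioo y 1] (1:ℝ)).NeBot := mem_closure_iff_nhdsWithin_neBot.1 hne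
        have t1 : Tendsto f (𝓝[Ioo y 1] (1:ℝ)) (𝓝 (f 1)) :=
          (hcf 1 h1I).mono_left (nhdsWithin_mono _ hsub)
        have t2 : Tendsto (fun z : ℝ => (f z - f y) / (z - y)) (𝓝[Ioo y 1] (1:ℝ))
            (𝓝 ((f 1 - f y) / (1 - y))) := by
          apply Tendsto.div (t1.sub tendsto_const_nhds)
            ((tendsto_id.mono_left nhdsWithin_le_nhds).sub tendsto_const_nhds)
          intro h; exact hy1.ne' (by linarith)
        refine le_of_tendsto t2 ?_
        refine eventually_nhdsWithin_of_forall ?_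
        intro z hz
        exact Kint x y z hx.1 hxy hz.1 hz.2
    -- extend to x = 0
    have Kfull : ∀ x ∈ Icc (0:ℝ) 1, ∀ z ∈ Icc (0:ℝ) 1, ∀ y : ℝ, x < y → y < z →
        (f z - f y) / (z - y) ≤ (f y - f x) / (y - x) := by
      intro x hx z hz y hxy hyz
      rcases lt_or_eq_of_le hx.1 with h | h
      · exact K1 x ⟨h, by linarith [hz.2]⟩ y z hxy hyz hz.2
      · have h0 : x = 0 := h.symm
        subst h0
        have hy1 : y < 1 := lt_of_lt_of_le hyz hz.2
        have hsub : Ioo (0:ℝ) y ⊆ Icc (0:ℝ) 1 := fun t ht => ⟨ht.1.le, by nlinarith [ht.2]⟩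
        have hne : (0:ℝ) ∈ closure (Ioo (0:ℝ) y) := by
          rw [closure_Ioo (ne_of_lt hxy)]; exact ⟨le_refl _, hxy.le⟩
        haveI : (𝓝[Ioo (0:ℝ) y] (0:ℝ)).NeBot := mem_closure_iff_nhdsWithin_neBot.1 hne
        have t1 : Tendsto f (𝓝[Ioo (0:ℝ) y] (0:ℝ)) (𝓝 (f 0)) :=
          (hcf 0 h0I).mono_left (nhdsWithin_mono _ hsub)
        have t2 : Tendsto (fun x' : ℝ => (f y - f x') / (y - x')) (𝓝[Ioo (0:ℝ) y] (0:ℝ))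
            (𝓝 ((f y - f 0) / (y - 0))) := by
          apply Tendsto.div (tendsto_const_nhds.sub t1)
            (tendsto_const_nhds.sub (tendsto_id.mono_left nhdsWithin_le_nhds))
          intro hc; exact (ne_of_gt hxy) (by linarith)
        refine ge_of_tendsto t2 ?_
        refine eventually_nhdsWithin_of_forall ?_
        intro x' hx'
        exact K1 x' ⟨hx'.1, by linarith [hx'.2]⟩ y z hx'.2 hyz hz.2
    exact concaveOn_of_slope_anti_adjacent (convex_Icc 0 1)
      fun {x y z} hx hz hxy hyz => Kfull x hx z hz y hxy hyz
end

section
/- Let h₁, h₂ : [0,1] → [0,1] be twice continuously differentiable with hᵢ' > 0, hᵢ(0)=0, hᵢ(1)=1, and suppose -h₂''(p)/h₂'(p) ≥ -h₁''(p)/h₁'(p) for all p ∈ (0,1). Then for all p₀ and ε with 0 < ε ≤ min(p₀, 1-p₀) and p₀ < 1, the DT risk premia satisfy ρ₂(p₀,ε) ≥ ρ₁(p₀,ε), where ρᵢ(p₀,ε) = (1/2)·((hᵢ(p₀)-hᵢ(p₀-ε)) - (hᵢ(p₀+ε)-hᵢ(p₀)))/(hᵢ(p₀+ε)-hᵢ(p₀-ε)).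 -/
/-!
The ratio `φ = h₂' / h₁'` has logarithmic derivative `h₂''/h₂' - h₁''/h₁' ≤ 0`, so it is
antitone. By Cauchy's mean value theorem the increments of `h₂` over `[p₀ - ε, p₀]` and
`[p₀, p₀ + ε]` are those of `h₁` scaled by values of `φ` at a left and a right point, so
relative to `h₁` the function `h₂` gains more on the left than on the right. The premium
`(A - B) / (2 (A + B))` of left and right increments `A`, `B` increases with `A / B`.
-/

open Set

noncomputable def dtRiskPremium (h : ℝ → ℝ) (p₀ ε : ℝ) : ℝ :=
  (1/2) * ((h p₀ - h (p₀ - ε)) - (h (p₀ + ε) - h p₀)) / (h (p₀ + ε) - h (p₀ - ε))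

section Calculus

variable {D : Set ℝ} {f g : ℝ → ℝ}

lemma differentiableOn_of_forall_deriv_pos (hf' : ∀ p ∈ D, 0 < deriv f p) :
    DifferentiableOn ℝ f D := fun p hp =>
  (differentiableAt_of_deriv_ne_zero (hf' p hp).ne').differentiableWithinAt

lemma strictMonoOn_of_forall_deriv_pos (hD : Convex ℝ D) (hf' : ∀ p ∈ D, 0 < deriv f p) :
    StrictMonoOn f D :=
  strictMonoOn_of_deriv_pos hD (differentiableOn_of_forall_deriv_pos hf').continuousOn
    fun p hp => hf' p (interior_subset hp)

lemma antitoneOn_deriv_div_deriv (hD : Convex ℝ D) (hf : ContDiff ℝ 2 f) (hg : ContDiff ℝ 2 g)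
    (hf' : ∀ p ∈ D, 0 < deriv f p) (hg' : ∀ p ∈ interior D, 0 < deriv g p)
    (hidx : ∀ p ∈ interior D,
      -deriv (deriv f) p / deriv f p ≤ -deriv (deriv g) p / deriv g p) :
    AntitoneOn (fun p => deriv g p / deriv f p) D := by
  have hf1 : ContDiff ℝ 1 (deriv f) := hf.iterate_deriv' 1 1
  have hg1 : ContDiff ℝ 1 (deriv g) := hg.iterate_deriv' 1 1
  have hf2 : Differentiable ℝ (deriv f) := hf1.differentiable one_ne_zero
  have hg2 : Differentiable ℝ (deriv g) := hg1.differentiable one_ne_zero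
  refine antitoneOn_of_deriv_nonpos hD
    (hg1.continuous.continuousOn.div hf1.continuous.continuousOn fun p hp => (hf' p hp).ne')
    (fun p hp => ((hg2 p).div (hf2 p) (hf' p (interior_subset hp)).ne').differentiableWithinAt)
    fun p hp => ?_
  have hfp := hf' p (interior_subset hp)
  have hcross := (div_le_div_iff₀ hfp (hg' p hp)).mp (hidx p hp)
  rw [deriv_fun_div (hg2 p) (hf2 p) hfp.ne']
  exact div_nonpos_of_nonpos_of_nonneg (by nlinarith) (sq_nonneg _)

lemma exists_sub_eq_sub_mul_deriv_div_deriv (hD : Convex ℝ D) (hg : Differentiable ℝ g)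
    (hf' : ∀ p ∈ D, 0 < deriv f p) {x y : ℝ} (hx : x ∈ D) (hy : y ∈ D) (hxy : x < y) :
    ∃ ξ ∈ Ioo x y, g y - g x = (f y - f x) * (deriv g ξ / deriv f ξ) := by
  have hxyD : Icc x y ⊆ D := hD.ordConnected.out hx hy
  obtain ⟨ξ, hξ, hcauchy⟩ := exists_ratio_deriv_eq_ratio_slope f hxy
    ((differentiableOn_of_forall_deriv_pos hf').continuousOn.mono hxyD)
    ((differentiableOn_of_forall_deriv_pos hf').mono (Ioo_subset_Icc_self.trans hxyD))
    g hg.continuous.continuousOn hg.differentiableOn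
  refine ⟨ξ, hξ, ?_⟩
  rw [mul_div_assoc', eq_div_iff (hf' ξ (hxyD (Ioo_subset_Icc_self hξ))).ne', hcauchy]

lemma sub_mul_sub_le_of_antitoneOn_deriv_div_deriv (hD : Convex ℝ D) (hg : Differentiable ℝ g)
    (hf' : ∀ p ∈ D, 0 < deriv f p) (hφ : AntitoneOn (fun p => deriv g p / deriv f p) D)
    {x y u v : ℝ} (hx : x ∈ D) (hv : v ∈ D) (hxy : x < y) (hyu : y ≤ u) (huv : u < v) :
    (f y - f x) * (g v - g u) ≤ (g y - g x) * (f v - f u) := by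
  have hy : y ∈ D := hD.ordConnected.out hx hv ⟨hxy.le, hyu.trans huv.le⟩
  have hu : u ∈ D := hD.ordConnected.out hx hv ⟨hxy.le.trans hyu, huv.le⟩
  obtain ⟨ξ, hξ, hleft⟩ := exists_sub_eq_sub_mul_deriv_div_deriv hD hg hf' hx hy hxy
  obtain ⟨η, hη, hright⟩ := exists_sub_eq_sub_mul_deriv_div_deriv hD hg hf' hu hv huv
  have hφξη : deriv g η / deriv f η ≤ deriv g ξ / deriv f ξ :=
    hφ (hD.ordConnected.out hx hy (Ioo_subset_Icc_self hξ))
      (hD.ordConnected.out hu hv (Ioo_subset_Icc_self hη)) (hξ.2.trans_le (hyu.trans hη.1.le)).le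
  have hfmono := strictMonoOn_of_forall_deriv_pos hD hf'
  have hfxy : 0 < f y - f x := sub_pos.mpr (hfmono hx hy hxy)
  have hfuv : 0 < f v - f u := sub_pos.mpr (hfmono hu hv huv)
  rw [hleft, hright]
  calc (f y - f x) * ((f v - f u) * (deriv g η / deriv f η))
      ≤ (f y - f x) * ((f v - f u) * (deriv g ξ / deriv f ξ)) := by gcongr
    _ = (f y - f x) * (deriv g ξ / deriv f ξ) * (f v - f u) := by ring

end Calculus

lemma dtRiskPremium_le_dtRiskPremium {h₁ h₂ : ℝ → ℝ} {p₀ ε : ℝ}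
    (hpos₁ : 0 < h₁ (p₀ + ε) - h₁ (p₀ - ε)) (hpos₂ : 0 < h₂ (p₀ + ε) - h₂ (p₀ - ε))
    (hcross : (h₁ p₀ - h₁ (p₀ - ε)) * (h₂ (p₀ + ε) - h₂ p₀) ≤
      (h₂ p₀ - h₂ (p₀ - ε)) * (h₁ (p₀ + ε) - h₁ p₀)) :
    dtRiskPremium h₁ p₀ ε ≤ dtRiskPremium h₂ p₀ ε := by
  rw [dtRiskPremium, dtRiskPremium, div_le_div_iff₀ hpos₁ hpos₂]
  nlinarith

theorem dt_comparative_risk_premium_general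
    (h₁ h₂ : ℝ → ℝ)
    (hC1 : ContDiff ℝ 2 h₁) (hC2 : ContDiff ℝ 2 h₂)
    (hd1 : ∀ p ∈ Icc (0:ℝ) 1, 0 < deriv h₁ p)
    (hd2 : ∀ p ∈ Icc (0:ℝ) 1, 0 < deriv h₂ p)
    (hidx : ∀ p ∈ Ioo (0:ℝ) 1,
      -(deriv (deriv h₂) p) / deriv h₂ p ≥ -(deriv (deriv h₁) p) / deriv h₁ p) :
    ∀ p₀ ε : ℝ, 0 < ε → ε ≤ min p₀ (1 - p₀) → p₀ < 1 →
      (1/2) * ((h₁ p₀ - h₁ (p₀ - ε)) - (h₁ (p₀ + ε) - h₁ p₀)) /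
          (h₁ (p₀ + ε) - h₁ (p₀ - ε)) ≤
      (1/2) * ((h₂ p₀ - h₂ (p₀ - ε)) - (h₂ (p₀ + ε) - h₂ p₀)) /
          (h₂ (p₀ + ε) - h₂ (p₀ - ε)) := by
  intro p₀ ε hε hεle _
  show dtRiskPremium h₁ p₀ ε ≤ dtRiskPremium h₂ p₀ ε
  obtain ⟨hεp, hε1⟩ := le_min_iff.mp hεle
  have hleft : p₀ - ε ∈ Icc (0:ℝ) 1 := ⟨by linarith, by linarith⟩
  have hright : p₀ + ε ∈ Icc (0:ℝ) 1 := ⟨by linarith, by linarith⟩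
  have hlt : p₀ - ε < p₀ + ε := by linarith
  have hφ := antitoneOn_deriv_div_deriv (convex_Icc 0 1) hC1 hC2 hd1
    (by rw [interior_Icc]; exact fun p hp => hd2 p (Ioo_subset_Icc_self hp))
    (by rwa [interior_Icc])
  exact dtRiskPremium_le_dtRiskPremium
    (sub_pos.mpr (strictMonoOn_of_forall_deriv_pos (convex_Icc 0 1) hd1 hleft hright hlt))
    (sub_pos.mpr (strictMonoOn_of_forall_deriv_pos (convex_Icc 0 1) hd2 hleft hright hlt))
    (sub_mul_sub_le_of_antitoneOn_deriv_div_deriv (convex_Icc 0 1)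
      (hC2.differentiable two_ne_zero) hd1 hφ hleft hright
      (by linarith) le_rfl (by linarith))

/-- Global comparative risk aversion for the DT risk premium. -/
theorem dt_comparative_risk_premium
    (h₁ h₂ : ℝ → ℝ)
    (hC1 : ContDiff ℝ 2 h₁) (hC2 : ContDiff ℝ 2 h₂)
    (hmap1 : MapsTo h₁ (Icc 0 1) (Icc 0 1)) (hmap2 : MapsTo h₂ (Icc 0 1) (Icc 0 1))
    (hd1 : ∀ p ∈ Icc (0:ℝ) 1, 0 < deriv h₁ p)
    (hd2 : ∀ p ∈ Icc (0:ℝ) 1, 0 < deriv h₂ p)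
    (h10 : h₁ 0 = 0) (h11 : h₁ 1 = 1) (h20 : h₂ 0 = 0) (h21 : h₂ 1 = 1)
    (hidx : ∀ p ∈ Ioo (0:ℝ) 1,
      -(deriv (deriv h₂) p) / deriv h₂ p ≥ -(deriv (deriv h₁) p) / deriv h₁ p) :
    ∀ p₀ ε : ℝ, 0 < ε → ε ≤ min p₀ (1 - p₀) → p₀ < 1 →
      (1/2) * ((h₁ p₀ - h₁ (p₀ - ε)) - (h₁ (p₀ + ε) - h₁ p₀)) /
          (h₁ (p₀ + ε) - h₁ (p₀ - ε)) ≤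
      (1/2) * ((h₂ p₀ - h₂ (p₀ - ε)) - (h₂ (p₀ + ε) - h₂ p₀)) /
          (h₂ (p₀ + ε) - h₂ (p₀ - ε)) :=
  dt_comparative_risk_premium_general h₁ h₂ hC1 hC2 hd1 hd2 hidx
end

section
/- Let U₁, U₂ : ℝ → ℝ be twice continuously differentiable with Uᵢ' > 0 and suppose -U₂''(x)/U₂'(x) ≥ -U₁''(x)/U₁'(x) for all x. Then U₂'(x)/U₂'(w) ≤ U₁'(x)/U₁'(w) for all w < x, and U₂'(x)/U₂'(y) ≥ U₁'(x)/U₁'(y) for all x < y. -/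
/-! The Arrow–Pratt index of `Uᵢ` is `-logDeriv Uᵢ'`, so the hypothesis says that
`logDeriv U₂' ≤ logDeriv U₁'`. Hence the quotient `U₂' / U₁'` is antitone, since its derivative is
`(U₂' / U₁') (logDeriv U₂' - logDeriv U₁')`, and both inequalities are rearrangements of
`U₂'(x) / U₁'(x) ≤ U₂'(w) / U₁'(w)` for `w ≤ x`. -/

theorem antitone_div_of_logDeriv_le {f g : ℝ → ℝ} (hf : Differentiable ℝ f)
    (hg : Differentiable ℝ g) (hf0 : ∀ x, 0 < f x) (hg0 : ∀ x, 0 < g x)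
    (hfg : ∀ x, logDeriv f x ≤ logDeriv g x) : Antitone fun x ↦ f x / g x := by
  have hquot (x : ℝ) : HasDerivAt (fun x ↦ f x / g x)
      ((deriv f x * g x - f x * deriv g x) / g x ^ 2) x :=
    (hf x).hasDerivAt.div (hg x).hasDerivAt (hg0 x).ne'
  refine antitone_of_deriv_nonpos (fun x ↦ (hquot x).differentiableAt) fun x ↦ ?_
  rw [(hquot x).deriv]
  have hcross : deriv f x * g x ≤ deriv g x * f x :=
    (div_le_div_iff₀ (hf0 x) (hg0 x)).mp (hfg x)
  exact div_nonpos_of_nonpos_of_nonneg (by linarith) (sq_nonneg _)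

/-- Pratt's inequality (20): comparison of ratios of marginal utilities. -/
theorem pratt_marginal_utility_ratios
    (U₁ U₂ : ℝ → ℝ)
    (hC1 : ContDiff ℝ 2 U₁) (hC2 : ContDiff ℝ 2 U₂)
    (hd1 : ∀ x, 0 < deriv U₁ x) (hd2 : ∀ x, 0 < deriv U₂ x)
    (hidx : ∀ x, -(deriv (deriv U₂) x) / deriv U₂ x ≥
      -(deriv (deriv U₁) x) / deriv U₁ x) :
    (∀ w x : ℝ, w < x → deriv U₂ x / deriv U₂ w ≤ deriv U₁ x / deriv U₁ w) ∧
    (∀ x y : ℝ, x < y → deriv U₂ x / deriv U₂ y ≥ deriv U₁ x / deriv U₁ y) := by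
  have hlogDeriv (x : ℝ) : logDeriv (deriv U₂) x ≤ logDeriv (deriv U₁) x := by
    simpa only [logDeriv_apply, ge_iff_le, neg_div, neg_le_neg_iff] using hidx x
  have hanti : Antitone fun x ↦ deriv U₂ x / deriv U₁ x :=
    antitone_div_of_logDeriv_le hC2.differentiable_deriv_two hC1.differentiable_deriv_two
      hd2 hd1 hlogDeriv
  have hcross {a b : ℝ} (hab : a ≤ b) : deriv U₂ b * deriv U₁ a ≤ deriv U₂ a * deriv U₁ b :=
    (div_le_div_iff₀ (hd1 b) (hd1 a)).mp (hanti hab)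
  refine ⟨fun w x hwx ↦ ?_, fun x y hxy ↦ ?_⟩
  · rw [div_le_div_iff₀ (hd2 w) (hd1 w)]
    linarith [hcross hwx.le]
  · rw [ge_iff_le, div_le_div_iff₀ (hd1 y) (hd2 y)]
    linarith [hcross hxy.le]
end

section
/- Let U be twice continuously differentiable at x₀ with U'(x₀) > 0 and U three times differentiable, let h : [0,1] → [0,1] be three times continuously differentiable at p₀ ∈ (0,1) with h'(p₀) > 0, and let σ(ε₁,ε₂) solve (h(p₀+ε₂)-h(p₀-ε₂))·U(x₀-σ) = (h(p₀)-h(p₀-ε₂))·U(x₀-ε₁) + (h(p₀+ε₂)-h(p₀))·U(x₀+ε₁). Then σ(ε₁,ε₂) = -(ε₁ε₂/2)·h''(p₀)/h'(p₀) - (ε₁²/2)·U''(x₀)/U'(x₀) + o(ε₁² + ε₁ε₂) as (ε₁,ε₂) → (0,0) with ε₁,ε₂ > 0. -/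
/-!
Dividing the defining equation by the total weight `h (p₀ + ε₂) - h (p₀ - ε₂)` turns it into the
expected-utility equation `U (x₀ - σ) = (1 - w) U (x₀ - ε₁) + w U (x₀ + ε₁)` with the decision
weight `w = (h (p₀ + ε₂) - h p₀) / (h (p₀ + ε₂) - h (p₀ - ε₂))`. A second-order Taylor expansion
of `h` at `p₀` gives `2 w - 1 = ε₂ h''(p₀) / (2 h'(p₀)) + o(ε₂)`: this is the dual-theory premium.
Since `w → 1/2`, a first-order expansion of `U` shows `σ = o(ε₁)`, and a second-order one then
gives `σ = -ε₁ (2 w - 1) - ε₁² U''(x₀) / (2 U'(x₀)) + o(ε₁²)`: the expected-utility premium.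
-/

open Set Filter Asymptotics Topology

noncomputable def linearRemainder (f : ℝ → ℝ) (a t : ℝ) : ℝ :=
  f (a + t) - f a - deriv f a * t

section Taylor

variable {f : ℝ → ℝ} {a : ℝ}

theorem DifferentiableAt.isLittleO_linearRemainder (hf : DifferentiableAt ℝ f a) :
    linearRemainder f a =o[𝓝 0] fun t => t :=
  (hasDerivAt_iff_isLittleO_nhds_zero.1 hf.hasDerivAt).congr_left fun t => by
    rw [linearRemainder, smul_eq_mul, mul_comm]

theorem ContDiffAt.isLittleO_linearRemainder_sub_sq (hf : ContDiffAt ℝ 2 f a) :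
    (fun t => linearRemainder f a t - deriv (deriv f) a * t ^ 2 / 2) =o[𝓝 0] fun t => t ^ 2 := by
  obtain ⟨u, hu, hfu⟩ := hf.contDiffOn le_rfl (by simp)
  obtain ⟨r, hr, hball⟩ := Metric.mem_nhds_iff.1 hu
  have hmem := Metric.mem_ball_self hr (x := a)
  have htaylor := taylor_isLittleO (convex_ball a r) hmem (hfu.mono hball)
  rw [Metric.isOpen_ball.nhdsWithin_eq hmem] at htaylor
  have hshift : Tendsto (fun t : ℝ => a + t) (𝓝 0) (𝓝 a) := by
    simpa using (continuous_const_add a).tendsto 0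
  refine (htaylor.comp_tendsto hshift).congr (fun t => ?_) (fun t => by simp)
  have hiter (n : ℕ) :=
    iteratedDerivWithin_of_isOpen_eq_iterate (f := f) (n := n) Metric.isOpen_ball hmem
  simp only [taylorWithinEval_succ, taylor_within_apply, zero_add, Finset.range_one, hiter,
    smul_eq_mul, Finset.sum_singleton, Nat.factorial, Nat.cast_one, inv_one, pow_zero, mul_one,
    Function.iterate_zero, id_eq, one_mul, CharP.cast_eq_zero, pow_one,
    Nat.succ_eq_add_one, Nat.reduceAdd, Function.iterate_succ, Function.comp_apply,
    add_sub_cancel_left, linearRemainder]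
  ring

theorem ContDiffAt.isBigO_linearRemainder (hf : ContDiffAt ℝ 2 f a) :
    linearRemainder f a =O[𝓝 0] fun t => t ^ 2 :=
  (hf.isLittleO_linearRemainder_sub_sq.isBigO.add
    ((isBigO_refl _ _).const_mul_left (deriv (deriv f) a / 2))).congr_left fun t => by ring

end Taylor

section CentralDifference

variable {f : ℝ → ℝ} {a : ℝ}

theorem DifferentiableAt.isBigO_central_difference (hf : DifferentiableAt ℝ f a)
    (hf' : deriv f a ≠ 0) :
    (fun t => t) =O[𝓝 0] fun t => f (a + t) - f (a - t) := by
  have hrem := hf.isLittleO_linearRemainder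
  have hrem_neg : (fun t => linearRemainder f a (-t)) =o[𝓝 0] fun t => t := by
    have hneg : Tendsto (fun t : ℝ => -t) (𝓝 0) (𝓝 0) := by
      simpa using (continuous_neg (G := ℝ)).tendsto 0
    simpa [Function.comp_def] using (hrem.comp_tendsto hneg).neg_right
  have hlin : (fun t => t) =O[𝓝 0] fun t => 2 * deriv f a * t :=
    (isBigO_refl _ _).const_mul_right (by positivity)
  have hsub : (fun t => f (a + t) - f (a - t) - 2 * deriv f a * t) =o[𝓝 0]
      fun t => 2 * deriv f a * t :=
    ((hrem.sub hrem_neg).congr_left fun t => by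
      simp only [linearRemainder, ← sub_eq_add_neg]; ring).trans_isBigO hlin
  exact hlin.trans (hsub.right_isBigO_add.congr_right fun t => by ring)

theorem DifferentiableAt.eventually_central_difference_ne_zero (hf : DifferentiableAt ℝ f a)
    (hf' : deriv f a ≠ 0) : ∀ᶠ t in 𝓝[≠] 0, f (a + t) - f (a - t) ≠ 0 :=
  (((hf.isBigO_central_difference hf').mono nhdsWithin_le_nhds).eq_zero_imp.and
    self_mem_nhdsWithin).mono fun _ ht h0 => ht.2 (ht.1 h0)

end CentralDifference

noncomputable def upperWeight (h : ℝ → ℝ) (p₀ t : ℝ) : ℝ :=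
  (h (p₀ + t) - h p₀) / (h (p₀ + t) - h (p₀ - t))

section UpperWeight

variable {h : ℝ → ℝ} {p₀ : ℝ}

theorem isLittleO_two_mul_upperWeight_sub_one (hh : ContDiffAt ℝ 2 h p₀)
    (hh' : deriv h p₀ ≠ 0) :
    (fun t => 2 * upperWeight h p₀ t - 1 - deriv (deriv h) p₀ / deriv h p₀ * t / 2)
      =o[𝓝[≠] 0] fun t => t := by
  set κ := deriv (deriv h) p₀ / deriv h p₀ / 2
  set φ := fun t => linearRemainder h p₀ t - deriv (deriv h) p₀ * t ^ 2 / 2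
  have hφ : φ =o[𝓝 0] fun t => t ^ 2 := hh.isLittleO_linearRemainder_sub_sq
  have hφneg : (fun t => φ (-t)) =o[𝓝 0] fun t => t ^ 2 := by
    have hneg : Tendsto (fun t : ℝ => -t) (𝓝 0) (𝓝 0) := by
      simpa using (continuous_neg (G := ℝ)).tendsto 0
    simpa [Function.comp_def] using hφ.comp_tendsto hneg
  have hnum : (fun t => φ t + φ (-t) - κ * (t * (φ t - φ (-t)))) =o[𝓝 0] fun t => t ^ 2 := by
    have hbdd : (fun t : ℝ => t) =O[𝓝 0] fun _ => (1 : ℝ) :=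
      (continuous_id.tendsto 0).isBigO_one ℝ
    simpa using (hφ.add hφneg).sub
      (((hbdd.mul_isLittleO (hφ.sub hφneg)).congr_right fun t => one_mul _).const_mul_left κ)
  have hdiff := hh.differentiableAt (by norm_num)
  have hne : ∀ᶠ t : ℝ in 𝓝[≠] 0, t ≠ 0 := self_mem_nhdsWithin
  have hinv := ((hdiff.isBigO_central_difference hh').mono nhdsWithin_le_nhds).inv_rev
    (hne.mono fun t ht h0 => absurd h0 ht)
  -- With `a = b + c` the central difference split at `p₀`, `2 w - 1 - κ t = ((c - b) - κ t a) / a`,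
  -- and the numerator is the combination of Taylor remainders in `hnum`.
  refine ((hnum.mono nhdsWithin_le_nhds).mul_isBigO hinv).congr' ?_ ?_
  · filter_upwards [hdiff.eventually_central_difference_ne_zero hh'] with t ht
    simp only [upperWeight, φ, κ, linearRemainder, ← sub_eq_add_neg]
    field_simp
    ring
  · filter_upwards [hne] with t ht
    field_simp

theorem tendsto_upperWeight (hh : ContDiffAt ℝ 2 h p₀) (hh' : deriv h p₀ ≠ 0) :
    Tendsto (upperWeight h p₀) (𝓝[≠] 0) (𝓝 (1 / 2)) := by
  have hid : Tendsto (fun t : ℝ => t) (𝓝[≠] 0) (𝓝 0) :=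
    tendsto_nhdsWithin_of_tendsto_nhds (continuous_id.tendsto 0)
  have := ((isLittleO_two_mul_upperWeight_sub_one hh hh').trans_tendsto hid).add
    ((hid.const_mul (deriv (deriv h) p₀ / deriv h p₀)).div_const 2)
  refine (((this.add_const 1).div_const 2).congr fun t => ?_).trans ?_
  · ring
  · simp

end UpperWeight

section WeightedPremium

variable {α : Type*} {l : Filter α} {U : ℝ → ℝ} {x₀ : ℝ} {ε w σ : α → ℝ}

theorem premium_eq_of_weighted_utility {e v s : ℝ} (hU' : deriv U x₀ ≠ 0)
    (heq : U (x₀ - s) = (1 - v) * U (x₀ - e) + v * U (x₀ + e)) :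
    s = -(e * (2 * v - 1))
      - ((1 - v) * linearRemainder U x₀ (-e) + v * linearRemainder U x₀ e) / deriv U x₀
      + linearRemainder U x₀ (-s) / deriv U x₀ := by
  simp only [linearRemainder, ← sub_eq_add_neg]
  field_simp
  linear_combination -heq

theorem isLittleO_premium_of_weighted_utility (hU : DifferentiableAt ℝ U x₀)
    (hU' : deriv U x₀ ≠ 0) (hε : Tendsto ε l (𝓝 0)) (hw : Tendsto w l (𝓝 (1 / 2)))
    (hσ : Tendsto σ l (𝓝 0))
    (heq : ∀ᶠ x in l, U (x₀ - σ x) = (1 - w x) * U (x₀ - ε x) + w x * U (x₀ + ε x)) :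
    σ =o[l] ε := by
  set R := linearRemainder U x₀
  have hR := hU.isLittleO_linearRemainder
  have hr : (fun x => (deriv U x₀)⁻¹ * R (-σ x)) =o[l] σ :=
    (hR.comp_tendsto (by simpa using hσ.neg)).of_neg_right.const_mul_left _
  have hlin : (fun x => ε x * (2 * w x - 1)) =o[l] ε := by
    have : Tendsto (fun x => 2 * w x - 1) l (𝓝 0) := by
      simpa using (hw.const_mul 2).sub_const 1
    simpa using (isBigO_refl ε l).mul_isLittleO ((isLittleO_one_iff ℝ).2 this)
  have h₀ := (((tendsto_const_nhds (x := (1 : ℝ))).sub hw).isBigO_one ℝ).mul_isLittleO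
    (hR.comp_tendsto (by simpa using hε.neg))
  have h₁ := (hw.isBigO_one ℝ).mul_isLittleO (hR.comp_tendsto hε)
  simp only [Function.comp_def, one_mul] at h₀ h₁
  have hrest : (fun x => σ x - (deriv U x₀)⁻¹ * R (-σ x)) =o[l] ε := by
    refine (hlin.neg_left.sub ((h₀.of_neg_right.add h₁).const_mul_left (deriv U x₀)⁻¹)).congr' ?_
      EventuallyEq.rfl
    filter_upwards [heq] with x hx
    linear_combination -premium_eq_of_weighted_utility hU' hx
  exact hr.right_isBigO_sub.trans_isLittleO hrest

theorem isLittleO_premium_add_of_weighted_utility (hU : ContDiffAt ℝ 2 U x₀)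
    (hU' : deriv U x₀ ≠ 0) (hε : Tendsto ε l (𝓝 0)) (hw : Tendsto w l (𝓝 (1 / 2)))
    (hσ : Tendsto σ l (𝓝 0))
    (heq : ∀ᶠ x in l, U (x₀ - σ x) = (1 - w x) * U (x₀ - ε x) + w x * U (x₀ + ε x)) :
    (fun x => σ x + ε x * (2 * w x - 1) + ε x ^ 2 / 2 * (deriv (deriv U) x₀ / deriv U x₀))
      =o[l] fun x => ε x ^ 2 := by
  set ψ := fun t => linearRemainder U x₀ t - deriv (deriv U) x₀ * t ^ 2 / 2
  have hψ : ψ =o[𝓝 0] fun t => t ^ 2 := hU.isLittleO_linearRemainder_sub_sq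
  have hmean : (fun x => (1 - w x) * ψ (-ε x) + w x * ψ (ε x)) =o[l] fun x => ε x ^ 2 := by
    have h₀ := (((tendsto_const_nhds (x := (1 : ℝ))).sub hw).isBigO_one ℝ).mul_isLittleO
      (hψ.comp_tendsto (by simpa using hε.neg))
    have h₁ := (hw.isBigO_one ℝ).mul_isLittleO (hψ.comp_tendsto hε)
    simp only [Function.comp_def, one_mul, neg_sq] at h₀ h₁
    exact h₀.add h₁
  have hsmall := isLittleO_premium_of_weighted_utility (hU.differentiableAt (by norm_num)) hU'
    hε hw hσ heq
  have hquad : (fun x => linearRemainder U x₀ (-σ x)) =o[l] fun x => ε x ^ 2 :=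
    ((hU.isBigO_linearRemainder.comp_tendsto (by simpa using hσ.neg)).congr_right
      fun x => neg_sq (σ x)).trans_isLittleO (hsmall.pow two_pos)
  refine ((hquad.sub hmean).const_mul_left (deriv U x₀)⁻¹).congr' ?_ EventuallyEq.rfl
  filter_upwards [heq] with x hx
  simp only [ψ]
  linear_combination -premium_eq_of_weighted_utility hU' hx

end WeightedPremium

theorem rdu_risk_premium_local_general
    (U h : ℝ → ℝ) (x₀ p₀ : ℝ)
    (hUC : ContDiffAt ℝ 3 U x₀) (hUd : 0 < deriv U x₀)
    (hhC : ContDiffAt ℝ 3 h p₀) (hhd : 0 < deriv h p₀)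
    (sig : ℝ → ℝ → ℝ)
    (hsig : ∀ᶠ e : ℝ × ℝ in (nhdsWithin 0 (Ioi 0)) ×ˢ (nhdsWithin 0 (Ioi 0)),
      (h (p₀ + e.2) - h (p₀ - e.2)) * U (x₀ - sig e.1 e.2) =
        (h p₀ - h (p₀ - e.2)) * U (x₀ - e.1) +
        (h (p₀ + e.2) - h p₀) * U (x₀ + e.1))
    (hsig0 : Filter.Tendsto (fun e : ℝ × ℝ => sig e.1 e.2)
      ((nhdsWithin 0 (Ioi 0)) ×ˢ (nhdsWithin 0 (Ioi 0))) (nhds 0)) :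
    (fun e : ℝ × ℝ => sig e.1 e.2
        + e.1 * e.2 / 2 * (deriv (deriv h) p₀ / deriv h p₀)
        + e.1 ^ 2 / 2 * (deriv (deriv U) x₀ / deriv U x₀))
      =o[(nhdsWithin (0:ℝ) (Ioi 0)) ×ˢ (nhdsWithin (0:ℝ) (Ioi 0))]
        (fun e : ℝ × ℝ => e.1 ^ 2 + e.1 * e.2) := by
  have hh : ContDiffAt ℝ 2 h p₀ := hhC.of_le (by norm_num)
  have hε : Tendsto (fun e : ℝ × ℝ => e.1) (𝓝[>] 0 ×ˢ 𝓝[>] 0) (𝓝 0) :=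
    tendsto_fst.mono_right nhdsWithin_le_nhds
  have hsnd : Tendsto (fun e : ℝ × ℝ => e.2) (𝓝[>] 0 ×ˢ 𝓝[>] 0) (𝓝[≠] 0) :=
    tendsto_snd.mono_right (nhdsGT_le_nhdsNE 0)
  have hweq : ∀ᶠ e : ℝ × ℝ in 𝓝[>] 0 ×ˢ 𝓝[>] 0, U (x₀ - sig e.1 e.2) =
      (1 - upperWeight h p₀ e.2) * U (x₀ - e.1) + upperWeight h p₀ e.2 * U (x₀ + e.1) := by
    have hne := (hh.differentiableAt (by norm_num)).eventually_central_difference_ne_zero hhd.ne'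
    filter_upwards [hsig, hsnd.eventually hne] with e he ha
    simp only [upperWeight]
    field_simp
    linear_combination he
  have hEU := isLittleO_premium_add_of_weighted_utility (hUC.of_le (by norm_num)) hUd.ne' hε
    ((tendsto_upperWeight hh hhd.ne').comp hsnd) hsig0 hweq
  have hDT := (isBigO_refl (fun e : ℝ × ℝ => e.1) _).mul_isLittleO
    ((isLittleO_two_mul_upperWeight_sub_one hh hhd.ne').comp_tendsto hsnd)
  refine (hEU.add_add hDT.neg_left).congr' (Eventually.of_forall fun e => ?_) ?_
  · simp only [Function.comp_apply]
    ring
  · filter_upwards [prod_mem_prod (self_mem_nhdsWithin (a := (0 : ℝ)) (s := Ioi 0))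
      self_mem_nhdsWithin] with e ⟨h1, h2⟩
    simp only [Function.comp_apply, Real.norm_eq_abs]
    rw [abs_of_pos (pow_pos h1 2), abs_of_pos (mul_pos h1 h2)]

/-- Local approximation of the RDU risk premium:
σ(ε₁,ε₂) = -(ε₁ε₂/2)·h''(p₀)/h'(p₀) - (ε₁²/2)·U''(x₀)/U'(x₀) + o(ε₁² + ε₁ε₂). -/
theorem rdu_risk_premium_local
    (U h : ℝ → ℝ) (x₀ p₀ : ℝ) (hp : p₀ ∈ Ioo (0:ℝ) 1)
    (hUC : ContDiffAt ℝ 3 U x₀) (hUd : 0 < deriv U x₀)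
    (hhC : ContDiffAt ℝ 3 h p₀) (hhd : 0 < deriv h p₀)
    (sig : ℝ → ℝ → ℝ)
    (hsig : ∀ᶠ e : ℝ × ℝ in (nhdsWithin 0 (Ioi 0)) ×ˢ (nhdsWithin 0 (Ioi 0)),
      (h (p₀ + e.2) - h (p₀ - e.2)) * U (x₀ - sig e.1 e.2) =
        (h p₀ - h (p₀ - e.2)) * U (x₀ - e.1) +
        (h (p₀ + e.2) - h p₀) * U (x₀ + e.1))
    (hsig0 : Filter.Tendsto (fun e : ℝ × ℝ => sig e.1 e.2)
      ((nhdsWithin 0 (Ioi 0)) ×ˢ (nhdsWithin 0 (Ioi 0))) (nhds 0)) :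
    (fun e : ℝ × ℝ => sig e.1 e.2
        + e.1 * e.2 / 2 * (deriv (deriv h) p₀ / deriv h p₀)
        + e.1 ^ 2 / 2 * (deriv (deriv U) x₀ / deriv U x₀))
      =o[(nhdsWithin (0:ℝ) (Ioi 0)) ×ˢ (nhdsWithin (0:ℝ) (Ioi 0))]
        (fun e : ℝ × ℝ => e.1 ^ 2 + e.1 * e.2) :=
  rdu_risk_premium_local_general U h x₀ p₀ hUC hUd hhC hhd sig hsig hsig0
end

section
/- Let U₁, U₂ be twice continuously differentiable with Uᵢ' > 0 and h₁, h₂ : [0,1] → [0,1] twice continuously differentiable with hᵢ' > 0, hᵢ(0)=0, hᵢ(1)=1. Suppose -U₂''/U₂' ≥ -U₁''/U₁' everywhere and -h₂''/h₂' ≥ -h₁''/h₁' on (0,1). Then for all x₀, all ε₁ > 0, and all 0 < ε₂ ≤ min(p₀,1-p₀) with p₀ < 1, the RDU risk premia satisfy σ₂(x₀,p₀,ε₁,ε₂) ≥ σ₁(x₀,p₀,ε₁,ε₂), where σᵢ solves (hᵢ(p₀+ε₂)-hᵢ(p₀-ε₂))·Uᵢ(x₀-σᵢ) = (hᵢ(p₀)-hᵢ(p₀-ε₂))·Uᵢ(x₀-ε₁)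 + (hᵢ(p₀+ε₂)-hᵢ(p₀))·Uᵢ(x₀+ε₁). -/
/-!
Both comparisons reduce to one fact: if `f` is more concave than `g` in the sense that the
index `-f''/f'` dominates `-g''/g'`, then `f'/g'` is antitone, and Cauchy's mean value theorem
turns this into the slope comparison `(f b - f m)/(g b - g m) ≤ (f m - f a)/(g m - g a)`.
Applied to the probability weights `h₂` vs `h₁` it says that agent 2 puts relatively more
decision weight on the bad outcome; applied to `U₂` vs `U₁` at agent 1's certainty equivalent
`m = x₀ - σ₁` it says that agent 2 values the utility gain `m → x₀ + ε₁` less relative to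
the loss `x₀ - ε₁ → m`. Together they show that agent 2's RDU value of the lottery is at most
`U₂ m`, hence `x₀ - σ₂ ≤ m`.
-/

open Set

noncomputable def arrowPrattIndex (f : ℝ → ℝ) (x : ℝ) : ℝ :=
  -deriv (deriv f) x / deriv f x

theorem antitoneOn_deriv_div_deriv_of_arrowPrattIndex_le {f g : ℝ → ℝ} {D : Set ℝ}
    (hD : Convex ℝ D) (hf : Differentiable ℝ (deriv f)) (hg : Differentiable ℝ (deriv g))
    (hf' : ∀ x ∈ interior D, 0 < deriv f x) (hg' : ∀ x ∈ D, 0 < deriv g x)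
    (hidx : ∀ x ∈ interior D, arrowPrattIndex g x ≤ arrowPrattIndex f x) :
    AntitoneOn (fun x => deriv f x / deriv g x) D := by
  refine antitoneOn_of_deriv_nonpos hD
    (hf.continuous.continuousOn.div hg.continuous.continuousOn fun x hx => (hg' x hx).ne')
    (fun x hx => (hf x |>.div (hg x) (hg' x (interior_subset hx)).ne').differentiableWithinAt)
    fun x hx => ?_
  have hgx := hg' x (interior_subset hx)
  have hcross : deriv (deriv f) x * deriv g x ≤ deriv (deriv g) x * deriv f x := by
    have := hidx x hx
    rw [arrowPrattIndex, arrowPrattIndex, div_le_div_iff₀ hgx (hf' x hx)] at this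
    linarith
  rw [deriv_fun_div (hf x) (hg x) hgx.ne']
  exact div_nonpos_of_nonpos_of_nonneg (by linarith) (sq_nonneg _)

theorem mul_sub_le_mul_sub_of_antitoneOn_deriv_div {f g : ℝ → ℝ} {a m b : ℝ}
    (ham : a < m) (hmb : m < b)
    (hfc : ContinuousOn f (Icc a b)) (hfd : DifferentiableOn ℝ f (Ioo a b))
    (hgc : ContinuousOn g (Icc a b)) (hgd : DifferentiableOn ℝ g (Ioo a b))
    (hg' : ∀ x ∈ Ioo a b, 0 < deriv g x)
    (hanti : AntitoneOn (fun x => deriv f x / deriv g x) (Ioo a b)) :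
    (g m - g a) * (f b - f m) ≤ (f m - f a) * (g b - g m) := by
  have hmI : m ∈ Icc a b := ⟨ham.le, hmb.le⟩
  obtain ⟨c, hc, hfc_eq⟩ := exists_ratio_deriv_eq_ratio_slope f ham
    (hfc.mono (Icc_subset_Icc_right hmb.le)) (hfd.mono (Ioo_subset_Ioo_right hmb.le)) g
    (hgc.mono (Icc_subset_Icc_right hmb.le)) (hgd.mono (Ioo_subset_Ioo_right hmb.le))
  obtain ⟨d, hd, hfd_eq⟩ := exists_ratio_deriv_eq_ratio_slope f hmb
    (hfc.mono (Icc_subset_Icc_left ham.le)) (hfd.mono (Ioo_subset_Ioo_left ham.le)) g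
    (hgc.mono (Icc_subset_Icc_left ham.le)) (hgd.mono (Ioo_subset_Ioo_left ham.le))
  have hcI : c ∈ Ioo a b := ⟨hc.1, hc.2.trans hmb⟩
  have hdI : d ∈ Ioo a b := ⟨ham.trans hd.1, hd.2⟩
  have hgc' := hg' c hcI
  have hgd' := hg' d hdI
  have hratio : deriv f d * deriv g c ≤ deriv f c * deriv g d :=
    (div_le_div_iff₀ hgd' hgc').mp (hanti hcI hdI (hc.2.trans hd.1).le)
  have hgmono : StrictMonoOn g (Icc a b) :=
    strictMonoOn_of_deriv_pos (convex_Icc a b) hgc (by rwa [interior_Icc])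
  have hgam : 0 ≤ g m - g a := sub_nonneg.mpr (hgmono ⟨le_rfl, (ham.trans hmb).le⟩ hmI ham).le
  have hgmb : 0 ≤ g b - g m := sub_nonneg.mpr (hgmono hmI ⟨(ham.trans hmb).le, le_rfl⟩ hmb).le
  refine le_of_mul_le_mul_right ?_ (mul_pos hgc' hgd')
  calc (g m - g a) * (f b - f m) * (deriv g c * deriv g d)
      = (g m - g a) * (g b - g m) * (deriv f d * deriv g c) := by
        linear_combination (g a - g m) * deriv g c * hfd_eq
    _ ≤ (g m - g a) * (g b - g m) * (deriv f c * deriv g d) :=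
        mul_le_mul_of_nonneg_left hratio (mul_nonneg hgam hgmb)
    _ = (f m - f a) * (g b - g m) * (deriv g c * deriv g d) := by
        linear_combination (g b - g m) * deriv g d * hfc_eq

theorem mul_sub_le_mul_sub_of_arrowPrattIndex_le {f g : ℝ → ℝ} {a m b : ℝ}
    (ham : a < m) (hmb : m < b) (hf : ContDiff ℝ 2 f) (hg : ContDiff ℝ 2 g)
    (hf' : ∀ x ∈ Ioo a b, 0 < deriv f x) (hg' : ∀ x ∈ Ioo a b, 0 < deriv g x)
    (hidx : ∀ x ∈ Ioo a b, arrowPrattIndex g x ≤ arrowPrattIndex f x) :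
    (g m - g a) * (f b - f m) ≤ (f m - f a) * (g b - g m) :=
  mul_sub_le_mul_sub_of_antitoneOn_deriv_div ham hmb hf.continuous.continuousOn
    (hf.differentiable two_ne_zero).differentiableOn hg.continuous.continuousOn
    (hg.differentiable two_ne_zero).differentiableOn hg' <|
    antitoneOn_deriv_div_deriv_of_arrowPrattIndex_le (convex_Ioo a b)
      hf.differentiable_deriv_two hg.differentiable_deriv_two
      (by rwa [interior_Ioo]) hg' (by rwa [interior_Ioo])

theorem certaintyEquivalent_le {U₁ U₂ : ℝ → ℝ}
    (hU₁ : StrictMono U₁) (hU₂ : StrictMono U₂) {lo hi m₁ m₂ A₁ B₁ A₂ B₂ : ℝ} (hlohi : lo < hi)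
    (hA₁ : 0 < A₁) (hB₁ : 0 < B₁) (hA₂ : 0 < A₂) (hB₂ : 0 < B₂)
    (hweight : A₁ * B₂ ≤ A₂ * B₁)
    (hslope : ∀ m ∈ Ioo lo hi,
      (U₁ m - U₁ lo) * (U₂ hi - U₂ m) ≤ (U₂ m - U₂ lo) * (U₁ hi - U₁ m))
    (hm₁ : (A₁ + B₁) * U₁ m₁ = A₁ * U₁ lo + B₁ * U₁ hi)
    (hm₂ : (A₂ + B₂) * U₂ m₂ = A₂ * U₂ lo + B₂ * U₂ hi) :
    m₂ ≤ m₁ := by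
  have hbalance : A₁ * (U₁ m₁ - U₁ lo) = B₁ * (U₁ hi - U₁ m₁) := by
    linear_combination hm₁
  have hU₁lohi := hU₁ hlohi
  have hlo : lo < m₁ := hU₁.lt_iff_lt.mp (by nlinarith)
  have hhi : m₁ < hi := hU₁.lt_iff_lt.mp (by nlinarith)
  have hQ₁ : 0 < U₁ hi - U₁ m₁ := sub_pos.mpr (hU₁ hhi)
  have hQ₂ : 0 ≤ U₂ hi - U₂ m₁ := sub_nonneg.mpr (hU₂ hhi).le
  have hgain_le_loss : B₂ * (U₂ hi - U₂ m₁) ≤ A₂ * (U₂ m₁ - U₂ lo) := by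
    refine le_of_mul_le_mul_left ?_ (mul_pos hA₁ hQ₁)
    calc A₁ * (U₁ hi - U₁ m₁) * (B₂ * (U₂ hi - U₂ m₁))
        = A₁ * B₂ * ((U₁ hi - U₁ m₁) * (U₂ hi - U₂ m₁)) := by ring
      _ ≤ A₂ * B₁ * ((U₁ hi - U₁ m₁) * (U₂ hi - U₂ m₁)) :=
        mul_le_mul_of_nonneg_right hweight (mul_nonneg hQ₁.le hQ₂)
      _ = A₂ * A₁ * ((U₁ m₁ - U₁ lo) * (U₂ hi - U₂ m₁)) := by
        linear_combination A₂ * (U₂ hi - U₂ m₁) * hbalance.symm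
      _ ≤ A₂ * A₁ * ((U₂ m₁ - U₂ lo) * (U₁ hi - U₁ m₁)) :=
        mul_le_mul_of_nonneg_left (hslope m₁ ⟨hlo, hhi⟩) (mul_pos hA₂ hA₁).le
      _ = A₁ * (U₁ hi - U₁ m₁) * (A₂ * (U₂ m₁ - U₂ lo)) := by ring
  refine hU₂.le_iff_le.mp (le_of_mul_le_mul_left ?_ (add_pos hA₂ hB₂))
  linarith

theorem rdu_comparative_risk_premium_general
    (U₁ U₂ h₁ h₂ : ℝ → ℝ)
    (hUC1 : ContDiff ℝ 2 U₁) (hUC2 : ContDiff ℝ 2 U₂)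
    (hUd1 : ∀ x, 0 < deriv U₁ x) (hUd2 : ∀ x, 0 < deriv U₂ x)
    (hhC1 : ContDiff ℝ 2 h₁) (hhC2 : ContDiff ℝ 2 h₂)
    (hhd1 : ∀ p ∈ Icc (0:ℝ) 1, 0 < deriv h₁ p)
    (hhd2 : ∀ p ∈ Icc (0:ℝ) 1, 0 < deriv h₂ p)
    (hUidx : ∀ x, -(deriv (deriv U₂) x) / deriv U₂ x ≥
      -(deriv (deriv U₁) x) / deriv U₁ x)
    (hhidx : ∀ p ∈ Ioo (0:ℝ) 1,
      -(deriv (deriv h₂) p) / deriv h₂ p ≥ -(deriv (deriv h₁) p) / deriv h₁ p) :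
    ∀ x₀ p₀ ε₁ ε₂ σ₁ σ₂ : ℝ, 0 < ε₁ → 0 < ε₂ → ε₂ ≤ min p₀ (1 - p₀) → p₀ < 1 →
      (h₁ (p₀ + ε₂) - h₁ (p₀ - ε₂)) * U₁ (x₀ - σ₁) =
        (h₁ p₀ - h₁ (p₀ - ε₂)) * U₁ (x₀ - ε₁) +
        (h₁ (p₀ + ε₂) - h₁ p₀) * U₁ (x₀ + ε₁) →
      (h₂ (p₀ + ε₂) - h₂ (p₀ - ε₂)) * U₂ (x₀ - σ₂) =
        (h₂ p₀ - h₂ (p₀ - ε₂)) * U₂ (x₀ - ε₁) +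
        (h₂ (p₀ + ε₂) - h₂ p₀) * U₂ (x₀ + ε₁) →
      σ₁ ≤ σ₂ := by
  intro x₀ p₀ ε₁ ε₂ σ₁ σ₂ hε₁ hε₂ hε₂le _ hσ₁ hσ₂
  obtain ⟨hε₂p, hε₂q⟩ := le_min_iff.mp hε₂le
  have hIcc : Icc (p₀ - ε₂) (p₀ + ε₂) ⊆ Icc 0 1 :=
    Icc_subset_Icc (by linarith) (by linarith)
  have hIoo : Ioo (p₀ - ε₂) (p₀ + ε₂) ⊆ Ioo 0 1 :=
    Ioo_subset_Ioo (by linarith) (by linarith)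
  have hweights_pos {h : ℝ → ℝ} (hC : ContDiff ℝ 2 h)
      (hd : ∀ p ∈ Icc (0:ℝ) 1, 0 < deriv h p) :
      0 < h p₀ - h (p₀ - ε₂) ∧ 0 < h (p₀ + ε₂) - h p₀ := by
    have hmono := (strictMonoOn_of_deriv_pos (convex_Icc 0 1) hC.continuous.continuousOn
      fun p hp => hd p (interior_subset hp)).mono hIcc
    have hp₀ : p₀ ∈ Icc (p₀ - ε₂) (p₀ + ε₂) := ⟨by linarith, by linarith⟩
    exact ⟨sub_pos.mpr (hmono ⟨le_rfl, by linarith⟩ hp₀ (by linarith)),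
      sub_pos.mpr (hmono hp₀ ⟨by linarith, le_rfl⟩ (by linarith))⟩
  obtain ⟨hA₁, hB₁⟩ := hweights_pos hhC1 hhd1
  obtain ⟨hA₂, hB₂⟩ := hweights_pos hhC2 hhd2
  have hweight := mul_sub_le_mul_sub_of_arrowPrattIndex_le (by linarith : p₀ - ε₂ < p₀)
    (by linarith : p₀ < p₀ + ε₂) hhC2 hhC1
    (fun p hp => hhd2 p (hIcc (Ioo_subset_Icc_self hp)))
    (fun p hp => hhd1 p (hIcc (Ioo_subset_Icc_self hp))) fun p hp => hhidx p (hIoo hp)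
  exact (sub_le_sub_iff_left x₀).mp <| certaintyEquivalent_le
    (strictMono_of_deriv_pos hUd1) (strictMono_of_deriv_pos hUd2)
    (by linarith : x₀ - ε₁ < x₀ + ε₁)
    hA₁ hB₁ hA₂ hB₂ hweight
    (fun m hm => mul_sub_le_mul_sub_of_arrowPrattIndex_le hm.1 hm.2 hUC2 hUC1
      (fun x _ => hUd2 x) (fun x _ => hUd1 x) fun x _ => hUidx x)
    (by linear_combination hσ₁)
    (by linear_combination hσ₂)

/-- Global comparative risk aversion for the RDU risk premium. -/
theorem rdu_comparative_risk_premium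
    (U₁ U₂ h₁ h₂ : ℝ → ℝ)
    (hUC1 : ContDiff ℝ 2 U₁) (hUC2 : ContDiff ℝ 2 U₂)
    (hUd1 : ∀ x, 0 < deriv U₁ x) (hUd2 : ∀ x, 0 < deriv U₂ x)
    (hhC1 : ContDiff ℝ 2 h₁) (hhC2 : ContDiff ℝ 2 h₂)
    (hmap1 : MapsTo h₁ (Icc 0 1) (Icc 0 1)) (hmap2 : MapsTo h₂ (Icc 0 1) (Icc 0 1))
    (hhd1 : ∀ p ∈ Icc (0:ℝ) 1, 0 < deriv h₁ p)
    (hhd2 : ∀ p ∈ Icc (0:ℝ) 1, 0 < deriv h₂ p)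
    (h10 : h₁ 0 = 0) (h11 : h₁ 1 = 1) (h20 : h₂ 0 = 0) (h21 : h₂ 1 = 1)
    (hUidx : ∀ x, -(deriv (deriv U₂) x) / deriv U₂ x ≥
      -(deriv (deriv U₁) x) / deriv U₁ x)
    (hhidx : ∀ p ∈ Ioo (0:ℝ) 1,
      -(deriv (deriv h₂) p) / deriv h₂ p ≥ -(deriv (deriv h₁) p) / deriv h₁ p) :
    ∀ x₀ p₀ ε₁ ε₂ σ₁ σ₂ : ℝ, 0 < ε₁ → 0 < ε₂ → ε₂ ≤ min p₀ (1 - p₀) → p₀ < 1 →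
      (h₁ (p₀ + ε₂) - h₁ (p₀ - ε₂)) * U₁ (x₀ - σ₁) =
        (h₁ p₀ - h₁ (p₀ - ε₂)) * U₁ (x₀ - ε₁) +
        (h₁ (p₀ + ε₂) - h₁ p₀) * U₁ (x₀ + ε₁) →
      (h₂ (p₀ + ε₂) - h₂ (p₀ - ε₂)) * U₂ (x₀ - σ₂) =
        (h₂ p₀ - h₂ (p₀ - ε₂)) * U₂ (x₀ - ε₁) +
        (h₂ (p₀ + ε₂) - h₂ p₀) * U₂ (x₀ + ε₁) →
      σ₁ ≤ σ₂ :=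
  rdu_comparative_risk_premium_general U₁ U₂ h₁ h₂ hUC1 hUC2 hUd1 hUd2 hhC1 hhC2 hhd1 hhd2 hUidx
    hhidx
end

section
/- Let U₁, U₂ be twice continuously differentiable with Uᵢ' > 0 and h₁, h₂ : [0,1] → [0,1] twice continuously differentiable with hᵢ' > 0, hᵢ(0)=0, hᵢ(1)=1. Suppose -U₂''/U₂' ≥ -U₁''/U₁' everywhere and -h₂''/h₂' ≥ -h₁''/h₁' on (0,1). Then for all x₀, all ε₁ > 0, and all 0 < ε₂ ≤ min(p₀,1-p₀) with p₀ < 1, the RDU probability premia satisfy μ₂ ≥ μ₁, where μᵢ is the solution in [-ε₂, ε₂] of (hᵢ(p₀+ε₂)-hᵢ(p₀-ε₂))·Uᵢ(x₀) = (hᵢ(p₀-μᵢ)-hᵢ(p₀-ε₂))·Uᵢ(x₀-ε₁) + (hᵢ(p₀+ε₂)-hᵢ(p₀-μᵢ))·Uᵢ(x₀+ε₁). -/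
open Set

/-! A larger Arrow–Pratt index `-f''/f'` makes `f₂'/f₁'` decreasing, so on any three points
`a ≤ b ≤ c` the increments of `f₂` over `[b, c]` and `[a, b]` stand in a smaller ratio than those
of `f₁`; this holds both for the utilities and for the weighting functions. Multiplying the two
ratio inequalities shows that at decision maker 1's premium `μ₁` decision maker 2 still weakly
prefers the sure outcome, and since the lottery strictly improves as `μ` grows, `μ₁ ≤ μ₂`. -/

theorem sub_le_sub_of_deriv_le {f g : ℝ → ℝ} (hf : Differentiable ℝ f) (hg : Differentiable ℝ g)
    {a b : ℝ} (hab : a ≤ b) (hfg : ∀ x ∈ Ioo a b, deriv f x ≤ deriv g x) :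
    f b - f a ≤ g b - g a := by
  have hmono : MonotoneOn (fun x => g x - f x) (Icc a b) := by
    refine monotoneOn_of_deriv_nonneg (convex_Icc a b) (hg.sub hf).continuous.continuousOn
      (hg.sub hf).differentiableOn fun x hx => ?_
    rw [interior_Icc] at hx
    rw [deriv_fun_sub (hg x) (hf x), sub_nonneg]
    exact hfg x hx
  have := hmono (left_mem_Icc.2 hab) (right_mem_Icc.2 hab) hab
  simp only at this
  linarith

noncomputable def arrowPratt (f : ℝ → ℝ) (x : ℝ) : ℝ :=
  -deriv (deriv f) x / deriv f x

theorem antitoneOn_deriv_div_deriv_s15 {f₁ f₂ : ℝ → ℝ} {s : Set ℝ} (hs : Convex ℝ s)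
    (hf₁ : Differentiable ℝ (deriv f₁)) (hf₂ : Differentiable ℝ (deriv f₂))
    (hpos₁ : ∀ x ∈ s, 0 < deriv f₁ x) (hpos₂ : ∀ x ∈ interior s, 0 < deriv f₂ x)
    (hidx : ∀ x ∈ interior s, arrowPratt f₁ x ≤ arrowPratt f₂ x) :
    AntitoneOn (fun x => deriv f₂ x / deriv f₁ x) s := by
  have hdiff : ∀ x ∈ s, DifferentiableAt ℝ (fun x => deriv f₂ x / deriv f₁ x) x :=
    fun x hx => (hf₂ x).div (hf₁ x) (hpos₁ x hx).ne'
  refine antitoneOn_of_deriv_nonpos hs (fun x hx => (hdiff x hx).continuousAt.continuousWithinAt)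
    (fun x hx => (hdiff x (interior_subset hx)).differentiableWithinAt) fun x hx => ?_
  have h₁ := hpos₁ x (interior_subset hx)
  have h₂ := hpos₂ x hx
  have hcross : deriv (deriv f₂) x * deriv f₁ x ≤ deriv (deriv f₁) x * deriv f₂ x := by
    have := hidx x hx
    rw [arrowPratt, arrowPratt, div_le_div_iff₀ h₁ h₂] at this
    linarith
  rw [deriv_fun_div (hf₂ x) (hf₁ x) h₁.ne']
  exact div_nonpos_of_nonpos_of_nonneg (by linarith) (sq_nonneg _)

/-- `f₂ - k • f₁` with `k = f₂'(b) / f₁'(b)` increases on `[a, b]` and decreases on `[b, c]`. -/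
theorem sub_mul_sub_le_of_antitoneOn_deriv_div {f₁ f₂ : ℝ → ℝ}
    (hf₁ : Differentiable ℝ f₁) (hf₂ : Differentiable ℝ f₂) {a b c : ℝ}
    (hab : a ≤ b) (hbc : b ≤ c) (hpos : ∀ x ∈ Icc a c, 0 < deriv f₁ x)
    (hanti : AntitoneOn (fun x => deriv f₂ x / deriv f₁ x) (Icc a c)) :
    (f₂ c - f₂ b) * (f₁ b - f₁ a) ≤ (f₁ c - f₁ b) * (f₂ b - f₂ a) := by
  set k := deriv f₂ b / deriv f₁ b
  have hb : b ∈ Icc a c := ⟨hab, hbc⟩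
  have hk₁ : Differentiable ℝ (fun x => k * f₁ x) := hf₁.const_mul k
  have hderiv : ∀ x, deriv (fun x => k * f₁ x) x = k * deriv f₁ x :=
    fun x => deriv_const_mul k (hf₁ x)
  have hk_le : ∀ x ∈ Icc a c, (k ≤ deriv f₂ x / deriv f₁ x ↔ k * deriv f₁ x ≤ deriv f₂ x) :=
    fun x hx => le_div_iff₀ (hpos x hx)
  have hle_k : ∀ x ∈ Icc a c, (deriv f₂ x / deriv f₁ x ≤ k ↔ deriv f₂ x ≤ k * deriv f₁ x) :=
    fun x hx => div_le_iff₀ (hpos x hx)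
  have hleft : k * f₁ b - k * f₁ a ≤ f₂ b - f₂ a :=
    sub_le_sub_of_deriv_le hk₁ hf₂ hab fun x hx => by
      have hx' : x ∈ Icc a c := ⟨hx.1.le, hx.2.le.trans hbc⟩
      rw [hderiv, ← hk_le x hx']
      exact hanti hx' hb hx.2.le
  have hright : f₂ c - f₂ b ≤ k * f₁ c - k * f₁ b :=
    sub_le_sub_of_deriv_le hf₂ hk₁ hbc fun x hx => by
      have hx' : x ∈ Icc a c := ⟨hab.trans hx.1.le, hx.2.le⟩
      rw [hderiv, ← hle_k x hx']
      exact hanti hb hx' hx.1.le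
  have hmono : MonotoneOn f₁ (Icc a c) :=
    monotoneOn_of_deriv_nonneg (convex_Icc a c) hf₁.continuous.continuousOn hf₁.differentiableOn
      fun x hx => (hpos x (interior_subset hx)).le
  have hab₁ : 0 ≤ f₁ b - f₁ a := sub_nonneg.2 (hmono (left_mem_Icc.2 (hab.trans hbc)) hb hab)
  have hbc₁ : 0 ≤ f₁ c - f₁ b := sub_nonneg.2 (hmono hb (right_mem_Icc.2 (hab.trans hbc)) hbc)
  calc (f₂ c - f₂ b) * (f₁ b - f₁ a) ≤ (k * f₁ c - k * f₁ b) * (f₁ b - f₁ a) :=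
        mul_le_mul_of_nonneg_right hright hab₁
    _ = (f₁ c - f₁ b) * (k * f₁ b - k * f₁ a) := by ring
    _ ≤ (f₁ c - f₁ b) * (f₂ b - f₂ a) := mul_le_mul_of_nonneg_left hleft hbc₁

theorem sub_mul_sub_le_of_arrowPratt_le {f₁ f₂ : ℝ → ℝ} {s : Set ℝ} (hs : Convex ℝ s)
    (hf₁ : ContDiff ℝ 2 f₁) (hf₂ : ContDiff ℝ 2 f₂)
    (hpos₁ : ∀ x ∈ s, 0 < deriv f₁ x) (hpos₂ : ∀ x ∈ interior s, 0 < deriv f₂ x)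
    (hidx : ∀ x ∈ interior s, arrowPratt f₁ x ≤ arrowPratt f₂ x)
    {a b c : ℝ} (ha : a ∈ s) (hc : c ∈ s) (hab : a ≤ b) (hbc : b ≤ c) :
    (f₂ c - f₂ b) * (f₁ b - f₁ a) ≤ (f₁ c - f₁ b) * (f₂ b - f₂ a) :=
  have hsub : Icc a c ⊆ s := hs.ordConnected.out ha hc
  sub_mul_sub_le_of_antitoneOn_deriv_div (hf₁.differentiable two_ne_zero)
    (hf₂.differentiable two_ne_zero) hab hbc (fun x hx => hpos₁ x (hsub hx))
    ((antitoneOn_deriv_div_deriv_s15 hs hf₁.differentiable_deriv_two hf₂.differentiable_deriv_two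
      hpos₁ hpos₂ hidx).mono hsub)

theorem mul_le_mul_of_cross_le_of_balance {a₁ b₁ a₂ b₂ A₁ B₁ A₂ B₂ : ℝ} (hA₁ : 0 < A₁) (hB₁ : 0 < B₁)
    (hsum : 0 < a₁ + b₁) (hb₂ : 0 ≤ b₂) (hB₂ : 0 ≤ B₂) (hbal : a₁ * A₁ = b₁ * B₁)
    (hw : b₂ * a₁ ≤ b₁ * a₂) (hu : B₂ * A₁ ≤ B₁ * A₂) :
    b₂ * B₂ ≤ a₂ * A₂ := by
  have ha₁ : 0 < a₁ := by
    by_contra! h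
    nlinarith [mul_nonpos_of_nonpos_of_nonneg h hA₁.le]
  have : b₂ * B₂ * (a₁ * A₁) ≤ a₂ * A₂ * (a₁ * A₁) :=
    calc b₂ * B₂ * (a₁ * A₁) = b₂ * a₁ * (B₂ * A₁) := by ring
      _ ≤ b₁ * a₂ * (B₁ * A₂) := mul_le_mul hw hu (by positivity) (by nlinarith)
      _ = a₂ * A₂ * (b₁ * B₁) := by ring
      _ = a₂ * A₂ * (a₁ * A₁) := by rw [hbal]
  exact le_of_mul_le_mul_right this (by positivity)

/-- The RDU value of the sure outcome `x₀` minus that of the lottery paying `x₀ - ε₁` and `x₀ + ε₁`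
with decision weights `h(p₀-μ) - h(p₀-ε₂)` and `h(p₀+ε₂) - h(p₀-μ)`, rearranged into increments
of `h` and `U`. -/
def rduPremiumGap (h U : ℝ → ℝ) (x₀ ε₁ p₀ ε₂ μ : ℝ) : ℝ :=
  (h (p₀ - μ) - h (p₀ - ε₂)) * (U x₀ - U (x₀ - ε₁)) -
    (h (p₀ + ε₂) - h (p₀ - μ)) * (U (x₀ + ε₁) - U x₀)

theorem rduPremiumGap_strictAntiOn {h U : ℝ → ℝ} {S : Set ℝ} (hh : StrictMonoOn h S)
    (hU : StrictMono U) {ε₁ : ℝ} (hε₁ : 0 < ε₁) (x₀ p₀ ε₂ : ℝ) :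
    StrictAntiOn (rduPremiumGap h U x₀ ε₁ p₀ ε₂) ((p₀ - ·) ⁻¹' S) := by
  intro μ hμ μ' hμ' hlt
  have hA : 0 < U x₀ - U (x₀ - ε₁) := sub_pos.2 (hU (by linarith))
  have hB : 0 < U (x₀ + ε₁) - U x₀ := sub_pos.2 (hU (by linarith))
  have hlt' : h (p₀ - μ') < h (p₀ - μ) := hh hμ' hμ (by linarith)
  unfold rduPremiumGap
  nlinarith

theorem rduPremiumGap_nonneg_of_eq_zero {h₁ h₂ U₁ U₂ : ℝ → ℝ} {x₀ ε₁ p₀ ε₂ μ : ℝ}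
    (hU₁ : StrictMono U₁) (hU₂ : Monotone U₂) (hε₁ : 0 < ε₁)
    (hh₁ : h₁ (p₀ - ε₂) < h₁ (p₀ + ε₂)) (hh₂ : h₂ (p₀ - μ) ≤ h₂ (p₀ + ε₂))
    (hUcross : (U₂ (x₀ + ε₁) - U₂ x₀) * (U₁ x₀ - U₁ (x₀ - ε₁)) ≤
      (U₁ (x₀ + ε₁) - U₁ x₀) * (U₂ x₀ - U₂ (x₀ - ε₁)))
    (hhcross : (h₂ (p₀ + ε₂) - h₂ (p₀ - μ)) * (h₁ (p₀ - μ) - h₁ (p₀ - ε₂)) ≤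
      (h₁ (p₀ + ε₂) - h₁ (p₀ - μ)) * (h₂ (p₀ - μ) - h₂ (p₀ - ε₂)))
    (h₀ : rduPremiumGap h₁ U₁ x₀ ε₁ p₀ ε₂ μ = 0) :
    0 ≤ rduPremiumGap h₂ U₂ x₀ ε₁ p₀ ε₂ μ :=
  sub_nonneg.2 <| mul_le_mul_of_cross_le_of_balance (sub_pos.2 (hU₁ (by linarith)))
    (sub_pos.2 (hU₁ (by linarith))) (by linarith) (sub_nonneg.2 hh₂)
    (sub_nonneg.2 (hU₂ (by linarith))) (sub_eq_zero.1 h₀) hhcross hUcross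

theorem rdu_comparative_probability_premium_general
    (U₁ U₂ h₁ h₂ : ℝ → ℝ)
    (hUC1 : ContDiff ℝ 2 U₁) (hUC2 : ContDiff ℝ 2 U₂)
    (hUd1 : ∀ x, 0 < deriv U₁ x) (hUd2 : ∀ x, 0 < deriv U₂ x)
    (hhC1 : ContDiff ℝ 2 h₁) (hhC2 : ContDiff ℝ 2 h₂)
    (hhd1 : ∀ p ∈ Icc (0:ℝ) 1, 0 < deriv h₁ p)
    (hhd2 : ∀ p ∈ Icc (0:ℝ) 1, 0 < deriv h₂ p)
    (hUidx : ∀ x, -(deriv (deriv U₂) x) / deriv U₂ x ≥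
      -(deriv (deriv U₁) x) / deriv U₁ x)
    (hhidx : ∀ p ∈ Ioo (0:ℝ) 1,
      -(deriv (deriv h₂) p) / deriv h₂ p ≥ -(deriv (deriv h₁) p) / deriv h₁ p) :
    ∀ x₀ p₀ ε₁ ε₂ μ₁ μ₂ : ℝ, 0 < ε₁ → 0 < ε₂ → ε₂ ≤ min p₀ (1 - p₀) → p₀ < 1 →
      μ₁ ∈ Icc (-ε₂) ε₂ → μ₂ ∈ Icc (-ε₂) ε₂ →
      (h₁ (p₀ + ε₂) - h₁ (p₀ - ε₂)) * U₁ x₀ =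
        (h₁ (p₀ - μ₁) - h₁ (p₀ - ε₂)) * U₁ (x₀ - ε₁) +
        (h₁ (p₀ + ε₂) - h₁ (p₀ - μ₁)) * U₁ (x₀ + ε₁) →
      (h₂ (p₀ + ε₂) - h₂ (p₀ - ε₂)) * U₂ x₀ =
        (h₂ (p₀ - μ₂) - h₂ (p₀ - ε₂)) * U₂ (x₀ - ε₁) +
        (h₂ (p₀ + ε₂) - h₂ (p₀ - μ₂)) * U₂ (x₀ + ε₁) →
      μ₁ ≤ μ₂ := by
  intro x₀ p₀ ε₁ ε₂ μ₁ μ₂ hε₁ hε₂ hε₂le _ hμ₁ hμ₂ hF₁ hF₂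
  obtain ⟨hε₂p₀, hε₂p₁⟩ := le_min_iff.1 hε₂le
  have hI : ∀ μ ∈ Icc (-ε₂) ε₂, p₀ - μ ∈ Icc (0:ℝ) 1 :=
    fun μ hμ => ⟨by linarith [hμ.2], by linarith [hμ.1]⟩
  have hr : p₀ - ε₂ ∈ Icc (0:ℝ) 1 := hI ε₂ ⟨by linarith, le_rfl⟩
  have hs : p₀ + ε₂ ∈ Icc (0:ℝ) 1 := by simpa using hI (-ε₂) ⟨le_rfl, by linarith⟩
  have hU₁ : StrictMono U₁ := strictMono_of_deriv_pos hUd1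
  have hU₂ : StrictMono U₂ := strictMono_of_deriv_pos hUd2
  have hh₁ : StrictMonoOn h₁ (Icc 0 1) := strictMonoOn_of_deriv_pos (convex_Icc 0 1)
    hhC1.continuous.continuousOn fun p hp => hhd1 p (interior_subset hp)
  have hh₂ : StrictMonoOn h₂ (Icc 0 1) := strictMonoOn_of_deriv_pos (convex_Icc 0 1)
    hhC2.continuous.continuousOn fun p hp => hhd2 p (interior_subset hp)
  have hUcross := sub_mul_sub_le_of_arrowPratt_le convex_univ hUC1 hUC2 (fun x _ => hUd1 x)
    (fun x _ => hUd2 x) (fun x _ => hUidx x) (mem_univ (x₀ - ε₁)) (mem_univ (x₀ + ε₁))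
    (b := x₀) (by linarith) (by linarith)
  have hhcross := sub_mul_sub_le_of_arrowPratt_le (convex_Icc 0 1) hhC1 hhC2 hhd1
    (fun p hp => hhd2 p (interior_subset hp)) (fun p hp => hhidx p (by rwa [interior_Icc] at hp))
    hr hs (b := p₀ - μ₁) (by linarith [hμ₁.2]) (by linarith [hμ₁.1])
  have hgap₂ : rduPremiumGap h₂ U₂ x₀ ε₁ p₀ ε₂ μ₂ = 0 := by
    unfold rduPremiumGap; linear_combination hF₂
  have hgap : 0 ≤ rduPremiumGap h₂ U₂ x₀ ε₁ p₀ ε₂ μ₁ :=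
    rduPremiumGap_nonneg_of_eq_zero hU₁ hU₂.monotone hε₁ (hh₁ hr hs (by linarith))
      (hh₂.monotoneOn (hI μ₁ hμ₁) hs (by linarith [hμ₁.1])) hUcross hhcross
      (by unfold rduPremiumGap; linear_combination hF₁)
  exact ((rduPremiumGap_strictAntiOn hh₂ hU₂ hε₁ x₀ p₀ ε₂).le_iff_ge (hI μ₂ hμ₂) (hI μ₁ hμ₁)).1
    (hgap₂.trans_le hgap)

/-- Global comparative risk aversion for the RDU probability premium. -/
theorem rdu_comparative_probability_premium
    (U₁ U₂ h₁ h₂ : ℝ → ℝ)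
    (hUC1 : ContDiff ℝ 2 U₁) (hUC2 : ContDiff ℝ 2 U₂)
    (hUd1 : ∀ x, 0 < deriv U₁ x) (hUd2 : ∀ x, 0 < deriv U₂ x)
    (hhC1 : ContDiff ℝ 2 h₁) (hhC2 : ContDiff ℝ 2 h₂)
    (hmap1 : MapsTo h₁ (Icc 0 1) (Icc 0 1)) (hmap2 : MapsTo h₂ (Icc 0 1) (Icc 0 1))
    (hhd1 : ∀ p ∈ Icc (0:ℝ) 1, 0 < deriv h₁ p)
    (hhd2 : ∀ p ∈ Icc (0:ℝ) 1, 0 < deriv h₂ p)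
    (h10 : h₁ 0 = 0) (h11 : h₁ 1 = 1) (h20 : h₂ 0 = 0) (h21 : h₂ 1 = 1)
    (hUidx : ∀ x, -(deriv (deriv U₂) x) / deriv U₂ x ≥
      -(deriv (deriv U₁) x) / deriv U₁ x)
    (hhidx : ∀ p ∈ Ioo (0:ℝ) 1,
      -(deriv (deriv h₂) p) / deriv h₂ p ≥ -(deriv (deriv h₁) p) / deriv h₁ p) :
    ∀ x₀ p₀ ε₁ ε₂ μ₁ μ₂ : ℝ, 0 < ε₁ → 0 < ε₂ → ε₂ ≤ min p₀ (1 - p₀) → p₀ < 1 →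
      μ₁ ∈ Icc (-ε₂) ε₂ → μ₂ ∈ Icc (-ε₂) ε₂ →
      (h₁ (p₀ + ε₂) - h₁ (p₀ - ε₂)) * U₁ x₀ =
        (h₁ (p₀ - μ₁) - h₁ (p₀ - ε₂)) * U₁ (x₀ - ε₁) +
        (h₁ (p₀ + ε₂) - h₁ (p₀ - μ₁)) * U₁ (x₀ + ε₁) →
      (h₂ (p₀ + ε₂) - h₂ (p₀ - ε₂)) * U₂ x₀ =
        (h₂ (p₀ - μ₂) - h₂ (p₀ - ε₂)) * U₂ (x₀ - ε₁) +
        (h₂ (p₀ + ε₂) - h₂ (p₀ - μ₂)) * U₂ (x₀ + ε₁) →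
      μ₁ ≤ μ₂ :=
  rdu_comparative_probability_premium_general U₁ U₂ h₁ h₂ hUC1 hUC2 hUd1 hUd2 hhC1 hhC2 hhd1 hhd2
    hUidx hhidx
end

section
/- Let U be continuous and strictly increasing and h : [0,1] → [0,1] strictly increasing and continuous with h(0)=0, h(1)=1. Fix x₀, ε₁ > 0, and 0 < ε₂ ≤ min(p₀, 1-p₀) with p₀ < 1. Then the equation (h(p₀+ε₂)-h(p₀-ε₂))·U(x₀) = (h(p₀-μ)-h(p₀-ε₂))·U(x₀-ε₁) + (h(p₀+ε₂)-h(p₀-μ))·U(x₀+ε₁) has a unique solution μ ∈ [-ε₂, ε₂]. If moreover h is concave on (0,1), then μ ≥ the solution obtained when h is the identity. -/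
/-!
Both equations are affine in the decision weight of the bad outcome: with
`θ = (U (x₀ + ε₁) - U x₀) / (U (x₀ + ε₁) - U (x₀ - ε₁)) ∈ [0, 1]`, the RDU equation says
`h (p₀ - μ) = (1 - θ) h (p₀ - ε₂) + θ h (p₀ + ε₂)` and the EU equation says
`p₀ - μid = (1 - θ) (p₀ - ε₂) + θ (p₀ + ε₂)`. The intermediate value theorem and strict
monotonicity of `h` give a unique `μ`; concavity of `h` (extended by continuity to the endpoints
of `[0, 1]`) gives `h (p₀ - μid) ≥ h (p₀ - μ)`, hence `μid ≤ μ`.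
-/

open Set

theorem ConcaveOn.closure_of_continuousOn {E : Type*} [AddCommGroup E] [Module ℝ E]
    [TopologicalSpace E] [IsTopologicalAddGroup E] [ContinuousSMul ℝ E] {s : Set E} {f : E → ℝ}
    (hf : ConcaveOn ℝ s f) (hc : ContinuousOn f (closure s)) : ConcaveOn ℝ (closure s) f := by
  refine ⟨hf.1.closure, fun x hx y hy a b ha hb hab => ?_⟩
  have hmaps : MapsTo (fun p : E × E => a • p.1 + b • p.2) (closure (s ×ˢ s)) (closure s) := by
    rw [closure_prod_eq]
    exact fun p hp => hf.1.closure hp.1 hp.2 ha hb hab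
  refine le_on_closure (s := s ×ˢ s) (f := fun p => a • f p.1 + b • f p.2)
    (g := fun p => f (a • p.1 + b • p.2)) (fun p hp => hf.2 hp.1 hp.2 ha hb hab) ?_
    (hc.comp (by fun_prop) hmaps) (x := (x, y)) (by rw [closure_prod_eq]; exact ⟨hx, hy⟩)
  rw [closure_prod_eq]
  exact ((hc.comp continuousOn_fst fun p hp => hp.1).const_smul a).add
    ((hc.comp continuousOn_snd fun p hp => hp.2).const_smul b)

theorem sub_mul_eq_sub_mul_add_sub_mul_iff {A B C a b c : ℝ} (hac : a ≠ c) :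
    (C - A) * b = (B - A) * a + (C - B) * c ↔
      B = (1 - (c - b) / (c - a)) * A + (c - b) / (c - a) * C := by
  have hca : c - a ≠ 0 := sub_ne_zero.2 hac.symm
  rw [one_sub_div hca, div_mul_eq_mul_div, div_mul_eq_mul_div, ← add_div,
    eq_div_iff hca]
  constructor <;> intro h <;> linarith

theorem StrictMonoOn.existsUnique_eq_of_continuousOn {f : ℝ → ℝ} {a b y : ℝ} (hab : a ≤ b)
    (hm : StrictMonoOn f (Icc a b)) (hc : ContinuousOn f (Icc a b)) (hy : y ∈ Icc (f a) (f b)) :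
    ∃! x, x ∈ Icc a b ∧ f x = y := by
  obtain ⟨x, hx, rfl⟩ := intermediate_value_Icc hab hc hy
  exact ⟨x, ⟨hx, rfl⟩, fun x' hx' => hm.injOn hx'.1 hx hx'.2⟩

theorem rdu_probability_premium_exists_unique_ge_eu_general
    (U h : ℝ → ℝ) (x₀ ε₁ p₀ ε₂ : ℝ)
    (hUm : StrictMono U)
    (hhm : StrictMonoOn h (Icc 0 1)) (hhc : ContinuousOn h (Icc 0 1))
    (hε₁ : 0 < ε₁) (hε₂ : 0 < ε₂) (hε₂le : ε₂ ≤ min p₀ (1 - p₀)) :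
    (∃! μ : ℝ, μ ∈ Icc (-ε₂) ε₂ ∧
        (h (p₀ + ε₂) - h (p₀ - ε₂)) * U x₀ =
          (h (p₀ - μ) - h (p₀ - ε₂)) * U (x₀ - ε₁) +
          (h (p₀ + ε₂) - h (p₀ - μ)) * U (x₀ + ε₁)) ∧
    (ConcaveOn ℝ (Ioo 0 1) h →
      ∀ μ μid : ℝ, μ ∈ Icc (-ε₂) ε₂ → μid ∈ Icc (-ε₂) ε₂ →
        (h (p₀ + ε₂) - h (p₀ - ε₂)) * U x₀ =
          (h (p₀ - μ) - h (p₀ - ε₂)) * U (x₀ - ε₁) +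
          (h (p₀ + ε₂) - h (p₀ - μ)) * U (x₀ + ε₁) →
        (2 * ε₂) * U x₀ =
          (ε₂ - μid) * U (x₀ - ε₁) + (ε₂ + μid) * U (x₀ + ε₁) →
        μid ≤ μ) := by
  have hsub : Icc (p₀ - ε₂) (p₀ + ε₂) ⊆ Icc 0 1 := by
    apply Icc_subset_Icc <;> linarith [min_le_left p₀ (1 - p₀), min_le_right p₀ (1 - p₀)]
  have hmem (μ : ℝ) : μ ∈ Icc (-ε₂) ε₂ ↔ p₀ - μ ∈ Icc (p₀ - ε₂) (p₀ + ε₂) := by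
    simp only [mem_Icc]
    constructor <;> rintro ⟨_, _⟩ <;> constructor <;> linarith
  have hUlo : U (x₀ - ε₁) < U x₀ := hUm (by linarith)
  have hUhi : U x₀ < U (x₀ + ε₁) := hUm (by linarith)
  have hne : U (x₀ - ε₁) ≠ U (x₀ + ε₁) := (hUlo.trans hUhi).ne
  simp only [sub_mul_eq_sub_mul_add_sub_mul_iff hne]
  set θ := (U (x₀ + ε₁) - U x₀) / (U (x₀ + ε₁) - U (x₀ - ε₁))
  have hθ₀ : 0 ≤ θ := div_nonneg (by linarith) (by linarith)
  have hθ₁ : θ ≤ 1 := (div_le_one (by linarith)).2 (by linarith)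
  have hlohi : p₀ - ε₂ ≤ p₀ + ε₂ := by linarith
  constructor
  · have hends : h (p₀ - ε₂) ≤ h (p₀ + ε₂) :=
      hhm.monotoneOn (hsub (left_mem_Icc.2 hlohi)) (hsub (right_mem_Icc.2 hlohi)) hlohi
    obtain ⟨q, ⟨hq, hqy⟩, huniq⟩ := (hhm.mono hsub).existsUnique_eq_of_continuousOn
      hlohi (hhc.mono hsub) (y := (1 - θ) * h (p₀ - ε₂) + θ * h (p₀ + ε₂))
      ⟨by nlinarith, by nlinarith⟩
    refine ⟨p₀ - q, ⟨(hmem _).2 (by simpa using hq), by simpa using hqy⟩, ?_⟩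
    rintro μ ⟨hμ, hμy⟩
    linarith [huniq (p₀ - μ) ⟨(hmem μ).1 hμ, hμy⟩]
  · intro hconc μ μid hμ hμid hμy hμid_eq
    have hid : p₀ - μid = (1 - θ) * (p₀ - ε₂) + θ * (p₀ + ε₂) :=
      (sub_mul_eq_sub_mul_add_sub_mul_iff hne).1 (by linear_combination hμid_eq)
    have hconc' : ConcaveOn ℝ (Icc 0 1) h := by
      simpa only [closure_Ioo zero_ne_one] using
        hconc.closure_of_continuousOn (by rwa [closure_Ioo zero_ne_one])
    have hle : h (p₀ - μ) ≤ h (p₀ - μid) := by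
      rw [hμy, hid]
      exact hconc'.2 (hsub (left_mem_Icc.2 hlohi)) (hsub (right_mem_Icc.2 hlohi))
        (by linarith) hθ₀ (by ring)
    linarith [(hhm.le_iff_le (hsub ((hmem μ).1 hμ)) (hsub ((hmem μid).1 hμid))).1 hle]

/-- Existence and uniqueness of the RDU probability premium μ, and its domination
of the EU probability premium when h is concave. -/
theorem rdu_probability_premium_exists_unique_ge_eu
    (U h : ℝ → ℝ) (x₀ ε₁ p₀ ε₂ : ℝ)
    (hUc : Continuous U) (hUm : StrictMono U)
    (hhm : StrictMonoOn h (Icc 0 1)) (hhc : ContinuousOn h (Icc 0 1))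
    (hmap : ∀ p ∈ Icc (0:ℝ) 1, h p ∈ Icc (0:ℝ) 1)
    (h0 : h 0 = 0) (h1 : h 1 = 1)
    (hε₁ : 0 < ε₁) (hε₂ : 0 < ε₂) (hε₂le : ε₂ ≤ min p₀ (1 - p₀)) (hp : p₀ < 1) :
    (∃! μ : ℝ, μ ∈ Icc (-ε₂) ε₂ ∧
        (h (p₀ + ε₂) - h (p₀ - ε₂)) * U x₀ =
          (h (p₀ - μ) - h (p₀ - ε₂)) * U (x₀ - ε₁) +
          (h (p₀ + ε₂) - h (p₀ - μ)) * U (x₀ + ε₁)) ∧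
    (ConcaveOn ℝ (Ioo 0 1) h →
      ∀ μ μid : ℝ, μ ∈ Icc (-ε₂) ε₂ → μid ∈ Icc (-ε₂) ε₂ →
        (h (p₀ + ε₂) - h (p₀ - ε₂)) * U x₀ =
          (h (p₀ - μ) - h (p₀ - ε₂)) * U (x₀ - ε₁) +
          (h (p₀ + ε₂) - h (p₀ - μ)) * U (x₀ + ε₁) →
        (2 * ε₂) * U x₀ =
          (ε₂ - μid) * U (x₀ - ε₁) + (ε₂ + μid) * U (x₀ + ε₁) →
        μid ≤ μ) :=
  rdu_probability_premium_exists_unique_ge_eu_general U h x₀ ε₁ p₀ ε₂ hUm hhm hhc hε₁ hε₂ hε₂le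
end
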